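/- arXiv:1209.4979 — 11 statements merged into one kernel-verified Lean document; each statement's English description precedes it below -/
import Mathlib

section
/- In the (A_n, C_k) lattice, if l = C_0 + Σ_{i=1}^n a_i C_i with integer coefficients satisfies ⟨l, l⟩ = −1, and α lies in the ℤ-span of C_1, …, C_n with ⟨α, α⟩ = −2, then |⟨l, α⟩| ≤ 1. -/
/-- The Gram matrix of the `(Aₙ, C_k)` lattice: basis `C₀, C₁, …, Cₙ` (index `i : Fin (n+1)`
corresponds to `Cᵢ`), with `⟨C₀,C₀⟩ = -1`, `⟨Cᵢ,Cᵢ⟩ = -2` for `1 ≤ i ≤ n`,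
`⟨Cᵢ,Cᵢ₊₁⟩ = 1` for `1 ≤ i ≤ n-1`, `⟨C₀,C_k⟩ = 1`, and all other off-diagonal entries `0`. -/
def gramA (n k : ℕ) (i j : Fin (n + 1)) : ℤ :=
  if i = j then (if (i : ℕ) = 0 then -1 else -2)
  else if (1 ≤ (i : ℕ) ∧ (j : ℕ) = (i : ℕ) + 1) ∨ (1 ≤ (j : ℕ) ∧ (i : ℕ) = (j : ℕ) + 1)
      ∨ ((i : ℕ) = 0 ∧ (j : ℕ) = k) ∨ ((j : ℕ) = 0 ∧ (i : ℕ) = k) then 1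
  else 0

/-- The symmetric bilinear form associated to a Gram matrix, on coordinate vectors. -/
def qform {m : ℕ} (g : Fin m → Fin m → ℤ) (x y : Fin m → ℤ) : ℤ :=
  ∑ i, ∑ j, x i * g i j * y j

/-- The class `l(a) = C₀ + ∑ aᵢ Cᵢ`, as a coordinate vector. -/
def lA (n : ℕ) (a : Fin n → ℤ) : Fin (n + 1) → ℤ := Fin.cons 1 a

/-- An element `α = ∑ bᵢ Cᵢ` of the ℤ-span of `C₁, …, Cₙ`, as a coordinate vector
(coefficient `0` on `C₀`). -/
def spanA (n : ℕ) (b : Fin n → ℤ) : Fin (n + 1) → ℤ := Fin.cons 0 b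

/-!
In the standard model `Aₙ ⊂ ℤⁿ⁺¹` (`Cᵢ ↦ e_{i-1} - e_i`, with the form `-∑ xⱼ yⱼ`) the
coordinates `d`, `e` of the `Aₙ`-parts of `l` and `α` sum to zero, and `C₀` pairs with a root
lattice vector with coordinates `d` as `∑_{j<k} dⱼ = ⟨d, u⟩`, `u` the indicator of `{j < k}`.
The hypotheses become `∑ d² = 2⟨d, u⟩` and `∑ e² = 2`, and `⟨l, α⟩ = ⟨e, u⟩ - ⟨d, e⟩`.
With `T = d - u` the first reads `∑ T (T + 1) = 0`, so every `Tⱼ` is `0` or `-1`; hence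
`2⟨l, α⟩ = -∑ (2T + 1) e` is at most `∑ |e| ≤ ∑ e² = 2` in absolute value.
-/

open Finset

lemma Int.mul_add_one_nonneg (t : ℤ) : 0 ≤ t * (t + 1) := by
  rcases le_or_gt 0 t with h | h <;> nlinarith

lemma Int.abs_le_mul_self (t : ℤ) : |t| ≤ t * t := by
  simpa [sq] using Int.natAbs_le_self_sq t

theorem abs_sum_mul_sub_sum_mul_le_one {ι : Type*} (s : Finset ι) (d e u : ι → ℤ)
    (hu : ∀ j ∈ s, u j * u j = u j) (hd : ∑ j ∈ s, d j = 0) (he : ∑ j ∈ s, e j = 0)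
    (hdd : ∑ j ∈ s, d j * d j = 2 * ∑ j ∈ s, d j * u j) (hee : ∑ j ∈ s, e j * e j = 2) :
    |∑ j ∈ s, e j * u j - ∑ j ∈ s, d j * e j| ≤ 1 := by
  set T : ι → ℤ := fun j => d j - u j
  have hT : ∑ j ∈ s, T j * (T j + 1) = 0 := by
    calc ∑ j ∈ s, T j * (T j + 1) = ∑ j ∈ s, (d j * d j - 2 * (d j * u j) + d j) :=
          sum_congr rfl fun j hj => by linear_combination hu j hj
      _ = 0 := by rw [sum_add_distrib, sum_sub_distrib, ← mul_sum, hdd, hd]; ring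
  have hunit : ∀ j ∈ s, |2 * T j + 1| = 1 := by
    intro j hj
    have hTj := (sum_eq_zero_iff_of_nonneg fun j _ => Int.mul_add_one_nonneg (T j)).mp hT j hj
    rcases mul_eq_zero.mp hTj with h | h
    · simp [h]
    · simp [show T j = -1 by omega]
  have hsum : 2 * (∑ j ∈ s, e j * u j - ∑ j ∈ s, d j * e j) = -∑ j ∈ s, (2 * T j + 1) * e j := by
    have : ∑ j ∈ s, (2 * T j + 1) * e j
        = 2 * ∑ j ∈ s, d j * e j - 2 * ∑ j ∈ s, e j * u j + ∑ j ∈ s, e j := by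
      rw [mul_sum, mul_sum, ← sum_sub_distrib, ← sum_add_distrib]
      exact sum_congr rfl fun j _ => by ring
    rw [this, he]; ring
  have htwice : 2 * |∑ j ∈ s, e j * u j - ∑ j ∈ s, d j * e j| ≤ 2 := by
    calc 2 * |∑ j ∈ s, e j * u j - ∑ j ∈ s, d j * e j|
        = |∑ j ∈ s, (2 * T j + 1) * e j| := by rw [← abs_two, ← abs_mul, hsum, abs_neg, abs_two]
      _ ≤ ∑ j ∈ s, |(2 * T j + 1) * e j| := abs_sum_le_sum_abs _ _
      _ = ∑ j ∈ s, |e j| := sum_congr rfl fun j hj => by rw [abs_mul, hunit j hj, one_mul]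
      _ ≤ ∑ j ∈ s, e j * e j := sum_le_sum fun j _ => Int.abs_le_mul_self (e j)
      _ = 2 := hee
  linarith

namespace AnCk

variable {n : ℕ}

/-- The coefficient of `C_m` in `∑ aᵢ Cᵢ`: `a i` is the coefficient of `C_{i+1}`, and the
sequence is `0` outside `1 ≤ m ≤ n`. -/
def coeff (a : Fin n → ℤ) (m : ℕ) : ℤ :=
  if h : 1 ≤ m ∧ m ≤ n then a ⟨m - 1, by omega⟩ else 0

/-- The coordinates `d₀, …, dₙ` of `∑ aᵢ Cᵢ` in the model `Cᵢ ↦ e_{i-1} - e_i` of `Aₙ`. -/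
def diffs (a : Fin n → ℤ) (j : ℕ) : ℤ := coeff a (j + 1) - coeff a j

def gramChain (i j : ℕ) : ℤ :=
  if i = j then -2 else if j = i + 1 ∨ i = j + 1 then 1 else 0

@[simp] lemma coeff_zero (a : Fin n → ℤ) : coeff a 0 = 0 := by
  simp [coeff]

@[simp] lemma coeff_succ (a : Fin n → ℤ) (i : Fin n) : coeff a (i + 1) = a i := by
  rw [coeff, dif_pos ⟨by omega, i.isLt⟩]
  simp

@[simp] lemma coeff_self_add_one (a : Fin n → ℤ) : coeff a (n + 1) = 0 := by
  simp [coeff]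

lemma sum_range_diffs (a : Fin n → ℤ) (m : ℕ) : ∑ j ∈ range m, diffs a j = coeff a m := by
  simp only [diffs, sum_range_sub, coeff_zero, sub_zero]

lemma sum_range_mul_ite_lt (f : ℕ → ℤ) (k N : ℕ) :
    ∑ j ∈ range N, f j * (if j < k then 1 else 0) = ∑ j ∈ range (min k N), f j := by
  simp only [mul_ite, mul_one, mul_zero, ← sum_filter]
  congr 1
  ext j
  simp only [mem_filter, mem_range]
  omega

lemma coeff_eq_sum_diffs_mul_ite (a : Fin n → ℤ) (k : ℕ) :
    coeff a k = ∑ j ∈ range (n + 1), diffs a j * (if j < k then 1 else 0) := by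
  rw [sum_range_mul_ite_lt, sum_range_diffs]
  rcases le_total k (n + 1) with hk | hk
  · rw [min_eq_left hk]
  · rw [min_eq_right hk, coeff_self_add_one, coeff, dif_neg (by omega)]

lemma sum_fin_ite_mul_eq_coeff (b : Fin n → ℤ) (k : ℕ) :
    ∑ j : Fin n, (if (j : ℕ) + 1 = k then 1 else 0) * b j = coeff b k := by
  by_cases hk : ¬(1 ≤ k ∧ k ≤ n)
  · rw [coeff, dif_neg hk]
    exact sum_eq_zero fun j _ => by rw [if_neg (by omega), zero_mul]
  obtain ⟨hk1, hkn⟩ := not_not.mp hk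
  rw [sum_eq_single ⟨k - 1, by omega⟩]
  · obtain ⟨m, rfl⟩ : ∃ m, k = m + 1 := ⟨k - 1, by omega⟩
    simp [coeff, show ¬n ≤ m by omega]
  · intro j _ hj
    rw [if_neg fun h => hj (Fin.ext (by simp; omega)), zero_mul]
  · simp

lemma gramChain_comm (i j : ℕ) : gramChain i j = gramChain j i := by
  unfold gramChain
  split_ifs <;> omega

lemma sum_range_gramChain_mul (X : ℕ → ℤ) (hX : X 0 = 0) (m : ℕ) :
    ∑ j ∈ range m, gramChain (m + 1) (j + 1) * X (j + 1) = X m := by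
  cases m with
  | zero => simp [hX]
  | succ m =>
    rw [sum_range_succ, sum_eq_zero fun j hj => ?_]
    · simp [gramChain]
    · simp only [mem_range] at hj
      rw [gramChain, if_neg (by omega), if_neg (by omega), zero_mul]

lemma sum_range_sum_range_gramChain (X Y : ℕ → ℤ) (hX : X 0 = 0) (hY : Y 0 = 0) (m : ℕ) :
    ∑ i ∈ range m, ∑ j ∈ range m, X (i + 1) * gramChain (i + 1) (j + 1) * Y (j + 1)
      = -∑ j ∈ range m, (X (j + 1) - X j) * (Y (j + 1) - Y j) - X m * Y m := by
  induction m with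
  | zero => simp [hX]
  | succ m ih =>
    have hcol : ∑ i ∈ range m, X (i + 1) * gramChain (i + 1) (m + 1) * Y (m + 1)
        = X m * Y (m + 1) := by
      rw [← sum_mul, ← sum_range_gramChain_mul X hX m]
      exact congrArg (· * Y (m + 1)) (sum_congr rfl fun i _ => by rw [gramChain_comm]; ring)
    have hrow : ∑ j ∈ range m, X (m + 1) * gramChain (m + 1) (j + 1) * Y (j + 1)
        = X (m + 1) * Y m := by
      simp only [mul_assoc, ← mul_sum, sum_range_gramChain_mul Y hY]
    simp only [sum_range_succ, sum_add_distrib, hcol, hrow, ih]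
    simp only [gramChain, if_true]
    ring

lemma gramA_zero_zero (n k : ℕ) : gramA n k 0 0 = -1 := by
  simp [gramA]

lemma gramA_zero_succ (k : ℕ) (j : Fin n) :
    gramA n k 0 j.succ = if (j : ℕ) + 1 = k then 1 else 0 := by
  simp [gramA, Fin.ext_iff]

lemma gramA_succ_zero (k : ℕ) (i : Fin n) :
    gramA n k i.succ 0 = if (i : ℕ) + 1 = k then 1 else 0 := by
  simp [gramA, Fin.ext_iff]

lemma gramA_succ_succ (k : ℕ) (i j : Fin n) :
    gramA n k i.succ j.succ = gramChain (i + 1) (j + 1) := by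
  simp [gramA, gramChain, Fin.ext_iff]

lemma qform_gramA_cons_cons (k : ℕ) (x₀ y₀ : ℤ) (a b : Fin n → ℤ) :
    qform (gramA n k) (Fin.cons x₀ a) (Fin.cons y₀ b)
      = -(x₀ * y₀) + x₀ * coeff b k + coeff a k * y₀
        - ∑ j ∈ range (n + 1), diffs a j * diffs b j := by
  have h0s : ∑ j : Fin n, x₀ * (if (j : ℕ) + 1 = k then 1 else 0) * b j = x₀ * coeff b k := by
    rw [← sum_fin_ite_mul_eq_coeff, mul_sum]
    exact sum_congr rfl fun _ _ => by ring
  have hs0 : ∑ i : Fin n, a i * (if (i : ℕ) + 1 = k then 1 else 0) * y₀ = coeff a k * y₀ := by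
    rw [← sum_fin_ite_mul_eq_coeff, sum_mul]
    exact sum_congr rfl fun _ _ => by ring
  have hss : ∑ i : Fin n, ∑ j : Fin n, a i * gramChain (i + 1) (j + 1) * b j
      = ∑ i ∈ range n, ∑ j ∈ range n,
          coeff a (i + 1) * gramChain (i + 1) (j + 1) * coeff b (j + 1) := by
    rw [← Fin.sum_univ_eq_sum_range]
    refine sum_congr rfl fun i _ => ?_
    rw [← Fin.sum_univ_eq_sum_range
      (fun j => coeff a (i + 1) * gramChain (i + 1) (j + 1) * coeff b (j + 1))]
    simp only [coeff_succ]
  simp only [qform, Fin.sum_univ_succ, Fin.cons_zero, Fin.cons_succ, gramA_zero_zero,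
    gramA_zero_succ, gramA_succ_zero, gramA_succ_succ, sum_add_distrib, h0s, hs0, hss,
    sum_range_sum_range_gramChain _ _ (coeff_zero a) (coeff_zero b), sum_range_succ (n := n),
    diffs, coeff_self_add_one]
  ring

end AnCk

open AnCk

theorem stmt1_general (n k : ℕ)
    (a b : Fin n → ℤ)
    (hl : qform (gramA n k) (lA n a) (lA n a) = -1)
    (hα : qform (gramA n k) (spanA n b) (spanA n b) = -2) :
    |qform (gramA n k) (lA n a) (spanA n b)| ≤ 1 := by
  simp only [lA, spanA, qform_gramA_cons_cons] at hl hα ⊢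
  rw [coeff_eq_sum_diffs_mul_ite a] at hl
  rw [coeff_eq_sum_diffs_mul_ite b]
  have hu : ∀ j ∈ range (n + 1), (if j < k then 1 else 0) * (if j < k then 1 else 0)
      = (if j < k then (1 : ℤ) else 0) := fun j _ => by split_ifs <;> norm_num
  have hsum (c : Fin n → ℤ) : ∑ j ∈ range (n + 1), diffs c j = 0 := by
    rw [sum_range_diffs, coeff_self_add_one]
  have key := abs_sum_mul_sub_sum_mul_le_one _ _ _ _ hu (hsum a) (hsum b)
    (by linarith) (by linarith)
  convert key using 2
  ring

/-- in the `(Aₙ, C_k)` lattice, if `l = C₀ + ∑ aᵢ Cᵢ` satisfies `⟨l,l⟩ = -1`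
and `α` lies in the ℤ-span of `C₁, …, Cₙ` with `⟨α,α⟩ = -2`, then `|⟨l,α⟩| ≤ 1`. -/
theorem stmt1 (n k : ℕ) (hn : 1 ≤ n) (hk1 : 1 ≤ k) (hkn : k ≤ n)
    (a b : Fin n → ℤ)
    (hl : qform (gramA n k) (lA n a) (lA n a) = -1)
    (hα : qform (gramA n k) (spanA n b) (spanA n b) = -2) :
    |qform (gramA n k) (lA n a) (spanA n b)| ≤ 1 :=
  stmt1_general n k a b hl hα
end

section
/- Let M be a ℤ-module with a symmetric bilinear form b, let C_0, C_1, …, C_n ∈ M and 1 ≤ k ≤ n satisfy b(C_0, C_0) = −1, b(C_0, C_k) = 1, and b(C_0, C_i) = 0 for i ≠ k (1 ≤ i ≤ n). Suppose l = C_0 + Σ_{i=1}^n a_i C_i with all a_i nonnegative integers, a_k ≥ 1, b(l, l) = −1, and b(l, C_i) ≥ −1 for every 1 ≤ i ≤ n. Then there exists an index i with b(l, C_i) = −1. -/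
/-!
If `b(l, Cᵢ) ≥ 0` for every `i`, then pairing `l` with `l = C₀ + ∑ aᵢ Cᵢ` gives
`b(l, l) = b(l, C₀) + ∑ aᵢ b(l, Cᵢ) ≥ b(l, C₀) = -1 + a_k ≥ 0`, contradicting `b(l, l) = -1`.
Since `b(l, Cᵢ) ≥ -1`, some `b(l, Cᵢ)` must therefore equal `-1`.
-/

open Finset

section AddMonoidHomClass

variable {F M ι : Type*} [AddCommGroup M] [FunLike F M ℤ] [AddMonoidHomClass F M ℤ]

theorem map_sum_zsmul_eq_single (f : F) {s : Finset ι} {k : ι} (hk : k ∈ s) (a : ι → ℤ)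
    (v : ι → M) (hv : ∀ i ∈ s, i ≠ k → f (v i) = 0) :
    f (∑ i ∈ s, a i • v i) = a k * f (v k) := by
  rw [map_sum, Finset.sum_eq_single_of_mem k hk fun i hi hik => by simp [hv i hi hik]]
  simp

theorem le_map_add_sum_zsmul (f : F) (y : M) (s : Finset ι) (a : ι → ℤ) (v : ι → M)
    (ha : ∀ i ∈ s, 0 ≤ a i) (hv : ∀ i ∈ s, 0 ≤ f (v i)) :
    f y ≤ f (y + ∑ i ∈ s, a i • v i) := by
  simp only [map_add, map_sum, map_zsmul, smul_eq_mul, le_add_iff_nonneg_right]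
  exact Finset.sum_nonneg fun i hi => mul_nonneg (ha i hi) (hv i hi)

end AddMonoidHomClass

/-- Lemma 3.9 of the paper, as a pure lattice fact: let `M` be a ℤ-module with a
symmetric bilinear form `b`, let `C₀, C₁, …, Cₙ ∈ M` and `1 ≤ k ≤ n` with `b(C₀,C₀) = -1`,
`b(C₀,C_k) = 1` and `b(C₀,Cᵢ) = 0` for `i ≠ k` (`1 ≤ i ≤ n`).  If
`l = C₀ + ∑_{i=1}^n aᵢ Cᵢ` with all `aᵢ` nonnegative integers, `a_k ≥ 1`, `b(l,l) = -1`,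
and `b(l,Cᵢ) ≥ -1` for every `1 ≤ i ≤ n`, then `b(l,Cᵢ) = -1` for some `i`. -/
theorem stmt2 (M : Type*) [AddCommGroup M] [Module ℤ M]
    (b : M →ₗ[ℤ] M →ₗ[ℤ] ℤ) (hsymm : ∀ x y : M, b x y = b y x)
    (n k : ℕ) (hk1 : 1 ≤ k) (hkn : k ≤ n)
    (C₀ : M) (C : ℕ → M) (a : ℕ → ℤ)
    (hb00 : b C₀ C₀ = -1) (hb0k : b C₀ (C k) = 1)
    (hb0i : ∀ i, 1 ≤ i → i ≤ n → i ≠ k → b C₀ (C i) = 0)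
    (ha : ∀ i, 1 ≤ i → i ≤ n → 0 ≤ a i) (hak : 1 ≤ a k)
    (l : M) (hl : l = C₀ + ∑ i ∈ Finset.Icc 1 n, a i • C i)
    (hll : b l l = -1)
    (hlC : ∀ i, 1 ≤ i → i ≤ n → -1 ≤ b l (C i)) :
    ∃ i, 1 ≤ i ∧ i ≤ n ∧ b l (C i) = -1 := by
  by_contra! hne
  have hlC₀ : b l C₀ = a k - 1 := by
    rw [hsymm, hl, map_add, map_sum_zsmul_eq_single (b C₀) (mem_Icc.2 ⟨hk1, hkn⟩) a C
      fun i hi => hb0i i (mem_Icc.1 hi).1 (mem_Icc.1 hi).2, hb00, hb0k]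
    ring
  have hlC_nonneg : ∀ i ∈ Icc 1 n, 0 ≤ b l (C i) := fun i hi => by
    obtain ⟨hi1, hin⟩ := mem_Icc.1 hi
    have := hlC i hi1 hin
    have := hne i hi1 hin
    omega
  have hle := le_map_add_sum_zsmul (b l) C₀ (Icc 1 n) a C
    (fun i hi => ha i (mem_Icc.1 hi).1 (mem_Icc.1 hi).2) hlC_nonneg
  rw [← hl, hlC₀, hll] at hle
  omega
end

section
/- In the (A_n, C_1) lattice, the set I = { a ∈ ℤ^n : a_i ≥ 0 for all i and ⟨l(a), l(a)⟩ = −1 } consists exactly of the n+1 tuples (1, …, 1, 0, …, 0) having m ones followed by n−m zeros for 0 ≤ m ≤ n; in particular |I| = n + 1. -/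
/-- The set `I` of coefficient tuples `a ∈ ℤⁿ` with all `aᵢ ≥ 0` and `⟨l(a), l(a)⟩ = -1`. -/
def IA (n k : ℕ) : Set (Fin n → ℤ) :=
  {a | (∀ i, 0 ≤ a i) ∧ qform (gramA n k) (lA n a) (lA n a) = -1}

/-! The vector `l(a) = C₀ + ∑ aᵢ Cᵢ` has coordinates `b = (1, a₁, …, aₙ)`; padding with
`b_{n+1} = 0`, the form of the chain `C₀ – C₁ – ⋯ – Cₙ` is
`⟨l(a), l(a)⟩ = -∑_{i ≤ n} (bᵢ - bᵢ₊₁)²`. So the integers `dᵢ = bᵢ - bᵢ₊₁` satisfy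
`∑ dᵢ² = 1`, while telescoping gives `∑ dᵢ = b₀ - b_{n+1} = 1`. Hence exactly one `d_m` is `1`
and the others vanish, i.e. `b` is `1` up to index `m` and `0` after. -/

open Finset

def chainGram (i j : ℕ) : ℤ :=
  if i = j then (if i = 0 then -1 else -2) else if i + 1 = j ∨ j + 1 = i then 1 else 0

lemma gramA_one_eq_chainGram (n : ℕ) (i j : Fin (n + 1)) : gramA n 1 i j = chainGram i j := by
  simp only [gramA, chainGram, Fin.ext_iff]
  split_ifs <;> omega

lemma chainGram_comm (i j : ℕ) : chainGram i j = chainGram j i := by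
  unfold chainGram; split_ifs <;> omega

lemma chainGram_of_add_two_le {i j : ℕ} (h : i + 2 ≤ j) : chainGram i j = 0 := by
  unfold chainGram; rw [if_neg (by omega), if_neg (by omega)]

lemma sum_mul_chainGram_succ (b : ℕ → ℤ) (N : ℕ) :
    ∑ i ∈ range (N + 1), b i * chainGram i (N + 1) = b N := by
  rw [sum_range_succ, sum_eq_zero fun i hi => by
    rw [chainGram_of_add_two_le (by simp at hi; omega), mul_zero]]
  simp [chainGram]

lemma sum_sum_chainGram (b : ℕ → ℤ) (N : ℕ) :
    ∑ i ∈ range (N + 1), ∑ j ∈ range (N + 1), b i * chainGram i j * b j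
      = -(∑ i ∈ range N, (b i - b (i + 1)) ^ 2) - b N ^ 2 := by
  induction N with
  | zero => simp [chainGram, sq]
  | succ N ih =>
    have hcol :
        ∑ i ∈ range (N + 1), b i * chainGram i (N + 1) * b (N + 1) = b N * b (N + 1) := by
      rw [← sum_mul, sum_mul_chainGram_succ]
    have hrow :
        ∑ j ∈ range (N + 1), b (N + 1) * chainGram (N + 1) j * b j = b (N + 1) * b N := by
      simp_rw [mul_assoc, ← mul_sum, chainGram_comm (N + 1), mul_comm (chainGram _ _),
        sum_mul_chainGram_succ]
    have hdiag : chainGram (N + 1) (N + 1) = -2 := by simp [chainGram]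
    simp only [sum_range_succ _ (N + 1), sum_add_distrib, hcol, hrow, ih, hdiag,
      sum_range_succ (fun i => (b i - b (i + 1)) ^ 2) N]
    ring

lemma exists_eq_ite_of_sum_sq_eq_one {ι : Type*} [DecidableEq ι] {s : Finset ι} {d : ι → ℤ}
    (hsq : ∑ i ∈ s, d i ^ 2 = 1) (hsum : ∑ i ∈ s, d i = 1) :
    ∃ m ∈ s, ∀ i ∈ s, d i = if i = m then 1 else 0 := by
  have hnonneg : ∀ i ∈ s, 0 ≤ d i ^ 2 - d i := fun i _ => by
    rcases le_or_gt (d i) 0 with h | h <;> nlinarith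
  have hzero : ∑ i ∈ s, (d i ^ 2 - d i) = 0 := by rw [sum_sub_distrib, hsq, hsum, sub_self]
  have hidem := (sum_eq_zero_iff_of_nonneg hnonneg).mp hzero
  have hbool : ∀ i ∈ s, d i = 0 ∨ d i = 1 := fun i hi => by
    have : d i * (d i - 1) = 0 := by linarith [hidem i hi]
    rcases mul_eq_zero.mp this with h | h
    · exact Or.inl h
    · exact Or.inr (by linarith)
  obtain ⟨m, hm, hdm⟩ := exists_ne_zero_of_sum_ne_zero (hsum.trans_ne one_ne_zero)
  have hdm : d m = 1 := (hbool m hm).resolve_left hdm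
  have herase : ∑ i ∈ s.erase m, d i = 0 := by
    linarith [add_sum_erase s d hm]
  have hrest := (sum_eq_zero_iff_of_nonneg fun i hi => by
    rcases hbool i (mem_of_mem_erase hi) with h | h <;> simp [h]).mp herase
  refine ⟨m, hm, fun i hi => ?_⟩
  split_ifs with him
  · rwa [him]
  · exact hrest i (mem_erase.mpr ⟨him, hi⟩)

lemma eq_of_sub_succ_eq {b c : ℕ → ℤ} {N : ℕ} (h₀ : b 0 = c 0)
    (h : ∀ i < N, b i - b (i + 1) = c i - c (i + 1)) : ∀ i ≤ N, b i = c i := by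
  intro i hi
  induction i with
  | zero => exact h₀
  | succ i ih => linarith [h i (by omega), ih (by omega)]

lemma sub_succ_ite_le (m i : ℕ) :
    ((if i ≤ m then 1 else 0) - if i + 1 ≤ m then 1 else 0 : ℤ) = if i = m then 1 else 0 := by
  split_ifs <;> omega

def lANat (n : ℕ) (a : Fin n → ℤ) (i : ℕ) : ℤ :=
  if h : i < n + 1 then lA n a ⟨i, h⟩ else 0

section lANat

variable {n : ℕ} (a : Fin n → ℤ)

lemma lANat_zero : lANat n a 0 = 1 := by
  simp [lANat, lA]

lemma lANat_succ (i : Fin n) : lANat n a (i + 1) = a i := by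
  simp [lANat, lA, ← Fin.succ_mk]

lemma lANat_of_le {i : ℕ} (h : n + 1 ≤ i) : lANat n a i = 0 :=
  dif_neg (by omega)

lemma qform_gramA_one_lA :
    qform (gramA n 1) (lA n a) (lA n a) =
      -∑ i ∈ range (n + 1), (lANat n a i - lANat n a (i + 1)) ^ 2 := by
  have hcoe : ∀ k : Fin (n + 1), lA n a k = lANat n a k := fun k => by
    rw [lANat, dif_pos k.isLt]
  rw [sum_range_succ, lANat_of_le a le_rfl, sub_zero, neg_add', ← sum_sum_chainGram]
  simp only [qform, Finset.sum_range, gramA_one_eq_chainGram, hcoe]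

lemma lANat_eq_ite_iff {m : ℕ} (hm : m ≤ n) :
    (∀ i ≤ n + 1, lANat n a i = if i ≤ m then 1 else 0) ↔
      a = fun i : Fin n => if (i : ℕ) < m then (1 : ℤ) else 0 := by
  constructor
  · intro h
    funext i
    rw [← lANat_succ a i, h _ (by omega)]
    simp only [Nat.add_one_le_iff]
  · rintro rfl i hi
    rcases i with _ | i
    · simp [lANat_zero]
    · rcases Nat.lt_or_ge i n with hin | hin
      · rw [lANat_succ _ ⟨i, hin⟩]
        simp
      · rw [lANat_of_le _ (by omega), if_neg (by omega)]

end lANat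

lemma mem_IA_one_iff (n : ℕ) (a : Fin n → ℤ) :
    a ∈ IA n 1 ↔ ∃ m ≤ n, a = fun i : Fin n => if (i : ℕ) < m then (1 : ℤ) else 0 := by
  simp only [IA, Set.mem_ofPred_eq, qform_gramA_one_lA, neg_inj]
  constructor
  · rintro ⟨-, hsq⟩
    have hsum : ∑ i ∈ range (n + 1), (lANat n a i - lANat n a (i + 1)) = 1 := by
      rw [sum_range_sub', lANat_zero, lANat_of_le a le_rfl, sub_zero]
    obtain ⟨m, hm, hd⟩ := exists_eq_ite_of_sum_sq_eq_one hsq hsum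
    have hmn : m ≤ n := Nat.lt_succ_iff.mp (mem_range.mp hm)
    refine ⟨m, hmn, (lANat_eq_ite_iff a hmn).mp <| eq_of_sub_succ_eq (by simp [lANat_zero])
      fun i hi => ?_⟩
    rw [hd i (mem_range.mpr hi), sub_succ_ite_le]
  · rintro ⟨m, hmn, rfl⟩
    refine ⟨fun i => by positivity, ?_⟩
    have hb := (lANat_eq_ite_iff _ hmn).mpr rfl
    rw [sum_congr rfl fun i hi => by
      rw [hb i (by simp at hi; omega), hb (i + 1) (by simp at hi; omega), sub_succ_ite_le]]
    simp [hmn]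

lemma injective_ite_lt (n : ℕ) :
    Function.Injective fun (m : Fin (n + 1)) (i : Fin n) => if (i : ℕ) < m then (1 : ℤ) else 0 := by
  intro m₁ m₂ h
  by_contra hne
  wlog hlt : m₁ < m₂ generalizing m₁ m₂
  · exact this h.symm (Ne.symm hne) (lt_of_le_of_ne (not_lt.mp hlt) (Ne.symm hne))
  have := congrFun h ⟨m₁, by omega⟩
  simp_all

theorem stmt3_general (n : ℕ) :
    IA n 1 = {a : Fin n → ℤ | ∃ m ≤ n, a = fun i : Fin n => if (i : ℕ) < m then (1 : ℤ) else 0}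
    ∧ (IA n 1).ncard = n + 1 := by
  have hset : IA n 1 =
      {a : Fin n → ℤ | ∃ m ≤ n, a = fun i : Fin n => if (i : ℕ) < m then (1 : ℤ) else 0} :=
    Set.ext (mem_IA_one_iff n)
  have hrange :
      {a : Fin n → ℤ | ∃ m ≤ n, a = fun i : Fin n => if (i : ℕ) < m then (1 : ℤ) else 0} =
        Set.range fun (m : Fin (n + 1)) (i : Fin n) => if (i : ℕ) < m then (1 : ℤ) else 0 := by
    ext a
    constructor
    · rintro ⟨m, hm, rfl⟩
      exact ⟨⟨m, Nat.lt_succ_of_le hm⟩, rfl⟩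
    · rintro ⟨m, rfl⟩
      exact ⟨m, Nat.le_of_lt_succ m.isLt, rfl⟩
  refine ⟨hset, ?_⟩
  rw [hset, hrange, Set.ncard_range_of_injective (injective_ite_lt n), Nat.card_eq_fintype_card,
    Fintype.card_fin]

/-- in the `(Aₙ, C₁)` lattice, the set `I` consists exactly of the `n+1` tuples
`(1,…,1,0,…,0)` having `m` ones followed by `n-m` zeros for `0 ≤ m ≤ n`; in particular
`|I| = n + 1`. -/
theorem stmt3 (n : ℕ) (hn : 1 ≤ n) :
    IA n 1 = {a : Fin n → ℤ | ∃ m ≤ n, a = fun i : Fin n => if (i : ℕ) < m then (1 : ℤ) else 0}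
    ∧ (IA n 1).ncard = n + 1 :=
  stmt3_general n
end

section
/- In the (A_n, C_k) lattice, the set I = { a ∈ ℤ^n : a_i ≥ 0 for all i and ⟨l(a), l(a)⟩ = −1 } has cardinality binomial(n+1, k). -/
/-!
Pad `a` to `b : ℕ → ℤ` with `b 0 = b (n + 1) = 0` and put `eᵢ = [i < k] - (b (i + 1) - b i)` for
`i ≤ n`. On `C₁, …, Cₙ` the form is minus the sum of the squared differences `(b (i + 1) - b i)²`,
while `C₀` contributes `-1 + 2 b k`; as the differences sum to zero, completing the square gives
`⟨l(a), l(a)⟩ = -1 - ∑ eᵢ (eᵢ - 1)`. Each summand is a nonnegative integer, so `a ∈ I` iff every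
`eᵢ ∈ {0, 1}`, and then `a ≥ 0` comes for free. Since `∑ eᵢ = k` and `b` is recovered from the
partial sums of `e`, the set `{i | eᵢ = 1}` identifies `I` with the `k`-subsets of `{0, …, n}`.
-/

open Finset

def pad {n : ℕ} (a : Fin n → ℤ) : ℕ → ℤ
  | 0 => 0
  | j + 1 => if h : j < n then a ⟨j, h⟩ else 0

@[simp]
lemma pad_zero {n : ℕ} (a : Fin n → ℤ) : pad a 0 = 0 := rfl

lemma pad_succ {n : ℕ} (a : Fin n → ℤ) (j : Fin n) : pad a (j + 1) = a j := by
  simp [pad]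

lemma pad_of_lt {n : ℕ} (a : Fin n → ℤ) {j : ℕ} (hj : n < j) : pad a j = 0 := by
  obtain ⟨j, rfl⟩ := Nat.exists_eq_succ_of_ne_zero (by omega : j ≠ 0)
  simp [pad, show ¬ j < n by omega]

lemma sum_range_path_form {R : Type*} [CommRing R] (B : ℕ → R) (hB : B 0 = 0) (m : ℕ) :
    ∑ i ∈ range m, ∑ j ∈ range m,
        B (i + 1) * (if i = j then -2 else if j = i + 1 ∨ i = j + 1 then 1 else 0) * B (j + 1)
      = -(∑ i ∈ range m, (B (i + 1) - B i) ^ 2 + B m ^ 2) := by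
  induction m with
  | zero => simp [hB]
  | succ m ih =>
    have row : ∑ j ∈ range m,
        (if m = j then -2 else if j = m + 1 ∨ m = j + 1 then 1 else 0) * B (j + 1) = B m := by
      rcases m with _ | m
      · simp [hB]
      · rw [sum_eq_single_of_mem m (by simp)] <;> grind
    have col : ∑ i ∈ range m,
        B (i + 1) * (if i = m then -2 else if m = i + 1 ∨ i = m + 1 then 1 else 0) = B m := by
      rw [← row]; refine sum_congr rfl fun j _ => ?_; grind
    simp only [sum_range_succ, sum_add_distrib, ← sum_mul, ih]
    rw [col]
    simp only [mul_assoc, ← mul_sum, row]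
    simp only [neg_add_rev, ↓reduceIte, mul_neg]
    ring

lemma gramA_zero_zero (n k : ℕ) : gramA n k 0 0 = -1 := by simp [gramA]

lemma gramA_zero_succ (n k : ℕ) (j : Fin n) :
    gramA n k 0 j.succ = if (j : ℕ) + 1 = k then 1 else 0 := by
  simp [gramA, Fin.ext_iff, eq_comm]

lemma gramA_succ_zero (n k : ℕ) (i : Fin n) :
    gramA n k i.succ 0 = if (i : ℕ) + 1 = k then 1 else 0 := by
  simp [gramA, Fin.ext_iff]

lemma gramA_succ_succ (n k : ℕ) (i j : Fin n) :
    gramA n k i.succ j.succ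
      = if (i : ℕ) = j then -2 else if (j : ℕ) = i + 1 ∨ (i : ℕ) = j + 1 then 1 else 0 := by
  simp [gramA, Fin.ext_iff]

lemma sum_ite_succ_eq_pad {n : ℕ} (a : Fin n → ℤ) (k : ℕ) :
    ∑ j : Fin n, (if (j : ℕ) + 1 = k then a j else 0) = pad a k := by
  rcases k with _ | k
  · simp [pad]
  · by_cases hk : k < n
    · rw [sum_eq_single ⟨k, hk⟩ (fun j _ hj => if_neg fun h => hj (Fin.ext (Nat.succ_injective h)))
        (by simp)]
      simp [pad, hk]
    · simp only [pad, hk, Nat.add_right_cancel_iff, dite_false]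
      exact sum_eq_zero fun j _ => if_neg (by omega)

lemma qform_lA (n k : ℕ) (a : Fin n → ℤ) :
    qform (gramA n k) (lA n a) (lA n a)
      = -1 + 2 * pad a k - ∑ i ∈ range (n + 1), (pad a (i + 1) - pad a i) ^ 2 := by
  have path : ∑ i : Fin n, ∑ j : Fin n, a i
      * (if (i : ℕ) = j then -2 else if (j : ℕ) = i + 1 ∨ (i : ℕ) = j + 1 then 1 else 0) * a j
      = -(∑ i ∈ range n, (pad a (i + 1) - pad a i) ^ 2 + pad a n ^ 2) := by
    rw [← sum_range_path_form (pad a) rfl n]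
    simp only [Finset.sum_range, pad_succ]
  simp only [qform, lA, Fin.sum_univ_succ, Fin.cons_zero, Fin.cons_succ, gramA_zero_zero,
    gramA_zero_succ, gramA_succ_zero, gramA_succ_succ, sum_add_distrib]
  rw [path]
  simp only [mul_one, one_mul, mul_ite, ite_mul, mul_zero, zero_mul, sum_ite_succ_eq_pad]
  rw [sum_range_succ, pad_of_lt a (Nat.lt_succ_self n)]
  ring

def defect (k : ℕ) (b : ℕ → ℤ) (i : ℕ) : ℤ := (if i < k then 1 else 0) - (b (i + 1) - b i)

def ofDefect (k : ℕ) (e : ℕ → ℤ) (j : ℕ) : ℤ := (min j k : ℕ) - ∑ i ∈ range j, e i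

lemma sum_range_ite_lt {M : Type*} [AddCommMonoid M] (f : ℕ → M) (j k : ℕ) :
    ∑ i ∈ range j, (if i < k then f i else 0) = ∑ i ∈ range (min j k), f i := by
  rw [← sum_filter]
  congr 1
  ext i
  simp only [mem_filter, mem_range]
  omega

lemma sum_range_defect (k : ℕ) {b : ℕ → ℤ} (hb : b 0 = 0) (j : ℕ) :
    ∑ i ∈ range j, defect k b i = (min j k : ℕ) - b j := by
  simp only [defect]
  rw [sum_sub_distrib, sum_range_ite_lt, sum_range_sub, hb]
  simp

lemma ofDefect_defect (k : ℕ) {b : ℕ → ℤ} (hb : b 0 = 0) : ofDefect k (defect k b) = b := by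
  funext j
  rw [ofDefect, sum_range_defect k hb]
  ring

lemma defect_ofDefect (k : ℕ) (e : ℕ → ℤ) (i : ℕ) : defect k (ofDefect k e) i = e i := by
  simp only [defect, ofDefect, sum_range_succ]
  push_cast
  split_ifs <;> omega

lemma qform_lA_eq_defect {n k : ℕ} (hk : k ≤ n + 1) (a : Fin n → ℤ) :
    qform (gramA n k) (lA n a) (lA n a)
      = -1 - ∑ i ∈ range (n + 1), defect k (pad a) i * (defect k (pad a) i - 1) := by
  set d : ℕ → ℤ := fun i => pad a (i + 1) - pad a i
  have hd : ∑ i ∈ range (n + 1), d i = 0 := by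
    rw [sum_range_sub, pad_of_lt a (Nat.lt_succ_self n), pad_zero, sub_zero]
  have hdk : ∑ i ∈ range (n + 1), (if i < k then d i else 0) = pad a k := by
    rw [sum_range_ite_lt, min_eq_right hk, sum_range_sub, pad_zero, sub_zero]
  have hterm : ∀ i, defect k (pad a) i * (defect k (pad a) i - 1)
      = d i ^ 2 + d i - 2 * (if i < k then d i else 0) := by
    intro i
    simp only [defect, d]
    split_ifs <;> ring
  rw [qform_lA, sum_congr rfl fun i _ => hterm i, sum_sub_distrib, sum_add_distrib, ← mul_sum,
    hd, hdk]
  ring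

lemma mul_sub_one_nonneg (e : ℤ) : 0 ≤ e * (e - 1) := by
  nlinarith [Int.le_self_sq e]

lemma pad_nonneg_of_defect {n k : ℕ} (hk : k ≤ n + 1) {a : Fin n → ℤ}
    (h : ∀ i < n + 1, defect k (pad a) i = 0 ∨ defect k (pad a) i = 1) (j : Fin n) :
    0 ≤ a j := by
  have h0 : ∀ i ∈ range (n + 1), 0 ≤ defect k (pad a) i := fun i hi => by
    rcases h i (mem_range.1 hi) with h | h <;> simp [h]
  have hle_len : ∑ i ∈ range (j + 1), defect k (pad a) i ≤ j + 1 := by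
    calc _ ≤ ∑ i ∈ range (j + 1), (1 : ℤ) := sum_le_sum fun i hi => by
            rcases h i (by rw [mem_range] at hi; omega) with h | h <;> simp [h]
      _ = j + 1 := by simp
  have hle_k : ∑ i ∈ range (j + 1), defect k (pad a) i ≤ k := by
    calc _ ≤ ∑ i ∈ range (n + 1), defect k (pad a) i :=
          sum_le_sum_of_subset_of_nonneg (range_subset_range.2 (by omega)) fun i hi _ => h0 i hi
      _ = k := by
          rw [sum_range_defect k (pad_zero a), pad_of_lt a (Nat.lt_succ_self n), min_eq_right hk]
          simp
  have := sum_range_defect k (pad_zero a) (j + 1)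
  rw [pad_succ] at this
  push_cast at this
  omega

lemma mem_IA_iff {n k : ℕ} (hk : k ≤ n + 1) (a : Fin n → ℤ) :
    a ∈ IA n k ↔ ∀ i < n + 1, defect k (pad a) i = 0 ∨ defect k (pad a) i = 1 := by
  have hq : qform (gramA n k) (lA n a) (lA n a) = -1
      ↔ ∀ i < n + 1, defect k (pad a) i = 0 ∨ defect k (pad a) i = 1 := by
    rw [qform_lA_eq_defect hk, sub_eq_self,
      sum_eq_zero_iff_of_nonneg fun _ _ => mul_sub_one_nonneg _]
    simp [mul_eq_zero, sub_eq_zero]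
  exact ⟨fun ha => hq.1 ha.2, fun h => ⟨pad_nonneg_of_defect hk h, hq.2 h⟩⟩

def ofSubset (n k : ℕ) (U : Finset ℕ) : Fin n → ℤ :=
  fun j => ofDefect k (fun i => if i ∈ U then 1 else 0) (j + 1)

lemma sum_range_boole_mem {N : ℕ} {U : Finset ℕ} (hU : U ⊆ range N) :
    ∑ i ∈ range N, (if i ∈ U then (1 : ℤ) else 0) = #U := by
  rw [sum_boole, filter_mem_eq_inter, inter_eq_right.2 hU]

section Subsets

variable {n k : ℕ} {U : Finset ℕ}

lemma pad_ofSubset (hk : k ≤ n + 1) (hU : U ∈ powersetCard k (range (n + 1))) {j : ℕ}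
    (hj : j ≤ n + 1) :
    pad (ofSubset n k U) j = ofDefect k (fun i => if i ∈ U then 1 else 0) j := by
  rw [mem_powersetCard] at hU
  rcases j with _ | j
  · simp [ofDefect]
  · by_cases hjn : j < n
    · simp [pad, ofSubset, hjn]
    · rw [pad_of_lt _ (by omega), ofDefect, show j + 1 = n + 1 by omega,
        sum_range_boole_mem hU.1, hU.2, min_eq_right hk, sub_self]

lemma defect_pad_ofSubset (hk : k ≤ n + 1) (hU : U ∈ powersetCard k (range (n + 1))) {i : ℕ}
    (hi : i < n + 1) :
    defect k (pad (ofSubset n k U)) i = if i ∈ U then 1 else 0 := by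
  rw [← defect_ofDefect k (fun i => if i ∈ U then 1 else 0) i]
  simp only [defect, pad_ofSubset hk hU (by omega : i ≤ n + 1),
    pad_ofSubset hk hU (by omega : i + 1 ≤ n + 1)]

lemma ofSubset_mem_IA (hk : k ≤ n + 1) (hU : U ∈ powersetCard k (range (n + 1))) :
    ofSubset n k U ∈ IA n k :=
  (mem_IA_iff hk _).2 fun i hi => by rw [defect_pad_ofSubset hk hU hi]; split_ifs <;> simp

end Subsets

lemma ofSubset_injOn {n k : ℕ} (hk : k ≤ n + 1) :
    Set.InjOn (ofSubset n k) (powersetCard k (range (n + 1)) : Set (Finset ℕ)) := by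
  intro U hU V hV h
  ext i
  by_cases hi : i < n + 1
  · have := defect_pad_ofSubset hk hU hi
    rw [h, defect_pad_ofSubset hk hV hi] at this
    split_ifs at this <;> simp_all
  · exact iff_of_false (fun h' => hi (mem_range.1 ((mem_powersetCard.1 hU).1 h')))
      (fun h' => hi (mem_range.1 ((mem_powersetCard.1 hV).1 h')))

lemma exists_ofSubset_eq {n k : ℕ} (hk : k ≤ n + 1) {a : Fin n → ℤ} (ha : a ∈ IA n k) :
    ∃ U ∈ powersetCard k (range (n + 1)), ofSubset n k U = a := by
  set U := (range (n + 1)).filter (fun i => defect k (pad a) i = 1)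
  have hdefect : ∀ i ∈ range (n + 1), defect k (pad a) i = if i ∈ U then 1 else 0 := by
    intro i hi
    rcases (mem_IA_iff hk a).1 ha i (mem_range.1 hi) with h | h <;> simp [U, h, hi]
  have hcard : (#U : ℤ) = k := by
    rw [← sum_range_boole_mem (filter_subset _ _), ← sum_congr rfl hdefect,
      sum_range_defect k (pad_zero a), pad_of_lt a (Nat.lt_succ_self n), min_eq_right hk]
    simp
  refine ⟨U, mem_powersetCard.2 ⟨filter_subset _ _, by exact_mod_cast hcard⟩, funext fun j => ?_⟩
  rw [ofSubset, ← pad_succ a j, ← ofDefect_defect k (pad_zero a), ofDefect, ofDefect,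
    sum_congr rfl fun i hi => hdefect i (by rw [mem_range] at hi ⊢; omega)]

lemma image_ofSubset_powersetCard {n k : ℕ} (hk : k ≤ n + 1) :
    ofSubset n k '' (powersetCard k (range (n + 1)) : Set (Finset ℕ)) = IA n k := by
  refine Set.Subset.antisymm ?_ fun a ha => exists_ofSubset_eq hk ha
  rintro _ ⟨U, hU, rfl⟩
  exact ofSubset_mem_IA hk hU

theorem stmt5_general (n k : ℕ) (hkn : k ≤ n) :
    (IA n k).ncard = Nat.choose (n + 1) k := by
  have hk : k ≤ n + 1 := by omega
  rw [← image_ofSubset_powersetCard hk, (ofSubset_injOn hk).ncard_image,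
    Set.ncard_coe_finset, card_powersetCard, card_range]

/-- Lemma 3.7 for type `Aₙ`: in the `(Aₙ, C_k)` lattice, the set `I` has
cardinality `(n+1).choose k`, the dimension of `Λᵏ ℂⁿ⁺¹`. -/
theorem stmt5 (n k : ℕ) (hn : 1 ≤ n) (hk1 : 1 ≤ k) (hkn : k ≤ n) :
    (IA n k).ncard = Nat.choose (n + 1) k :=
  stmt5_general n k hkn
end

section
/- In the (A_n, C_k) lattice, for every index i with 1 ≤ i ≤ n: ⟨l(a), C_i⟩ ∈ {−1, 0, 1} for every a ∈ I; the number of a ∈ I with ⟨l(a), C_i⟩ = 1 equals binomial(n−1, k−1), the number with ⟨l(a), C_i⟩ = −1 also equals binomial(n−1, k−1), and the number with ⟨l(a), C_i⟩ = 0 equals binomial(n−1, k) + binomial(n−1, k−2) (binomial coefficients with a negative lower index being 0). -/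
/-!
Extend the coefficients of `l(a)` to a sequence `s : ℕ → ℤ` with `s 0 = s (n + 1) = 0`.
Summation by parts gives `⟨l(a), l(a)⟩ = -1 + 2 s_k - ∑_{j ≤ n} (s_{j+1} - s_j)²`, which equals
`-1 - ∑_{j ≤ n} b_j (b_j - 1)` for `b_j = [j < k] - (s_{j+1} - s_j)`. Since `b (b - 1) ≥ 0` on `ℤ`,
`a ∈ I` exactly when every `b_j` is `0` or `1`, and nonnegativity of `a` then comes for free: `s` rises
up to `k` and falls after it. So `a ↦ {j ≤ n | b_j = 1}` is a bijection from `I` onto the `k`-subsets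
of `{0, …, n}`, under which `⟨l(a), C_i⟩ = b_{i-1} - b_i` becomes `[i - 1 ∈ S] - [i ∈ S]`; the three
counts are the numbers of `k`-subsets containing both, exactly one, or neither of `i - 1` and `i`.
-/

namespace AnCkLattice

open Finset

section Sequences

variable {R : Type*} [CommRing R]

theorem sum_mul_laplacian_add_sum_sq (s : ℕ → R) (N : ℕ) :
    ∑ m ∈ range (N + 1), s m * (s (m - 1) + s (m + 1) - 2 * s m)
      + ∑ j ∈ range (N + 1), (s (j + 1) - s j) ^ 2 = s (N + 1) * (s (N + 1) - s N) := by
  induction N with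
  | zero => simp; ring
  | succ N ih =>
    rw [sum_range_succ, sum_range_succ (fun j => (s (j + 1) - s j) ^ 2), Nat.add_sub_cancel]
    linear_combination ih

end Sequences

def defect (k : ℕ) (s : ℕ → ℤ) (j : ℕ) : ℤ := (if j < k then 1 else 0) - (s (j + 1) - s j)

section Defect

variable {k N : ℕ} {s : ℕ → ℤ}

theorem eq_sum_range_defect (h0 : s 0 = 0) (m : ℕ) :
    s m = ∑ j ∈ range m, ((if j < k then 1 else 0) - defect k s j) := by
  simp only [defect, sub_sub_cancel, sum_range_sub, h0, sub_zero]

theorem sum_defect_mul_defect_sub_one (h0 : s 0 = 0) (hN : s (N + 1) = 0) (hk : k ≤ N + 1) :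
    ∑ j ∈ range (N + 1), defect k s j * (defect k s j - 1)
      = ∑ j ∈ range (N + 1), (s (j + 1) - s j) ^ 2 - 2 * s k := by
  have hterm : ∀ j, defect k s j * (defect k s j - 1)
      = (s (j + 1) - s j) ^ 2 + (s (j + 1) - s j) - 2 * if j < k then s (j + 1) - s j else 0 := by
    intro j; unfold defect; split_ifs <;> ring
  have hlow : ∑ j ∈ range (N + 1), (if j < k then s (j + 1) - s j else 0) = s k := by
    rw [← sum_filter, show (range (N + 1)).filter (· < k) = range k by ext; simp; omega,
      sum_range_sub, h0, sub_zero]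
  rw [sum_congr rfl fun j _ => hterm j, sum_sub_distrib, sum_add_distrib, ← mul_sum, hlow,
    sum_range_sub, hN, h0]
  ring

theorem nonneg_of_defect_eq_zero_or_one (h0 : s 0 = 0) (hN : s (N + 1) = 0)
    (hb : ∀ j < N + 1, defect k s j = 0 ∨ defect k s j = 1) {m : ℕ} (hm : m ≤ N + 1) :
    0 ≤ s m := by
  by_cases hmk : m ≤ k
  · have hsum : s m = ∑ j ∈ range m, (s (j + 1) - s j) := by rw [sum_range_sub, h0, sub_zero]
    rw [hsum]
    refine sum_nonneg fun j hj => ?_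
    have hj : j < m := mem_range.1 hj
    have := hb j (by omega)
    rw [defect, if_pos (by omega)] at this
    omega
  · have hsum : s m = -∑ j ∈ Ico m (N + 1), (s (j + 1) - s j) := by
      rw [sum_Ico_sub _ hm, hN]; ring
    rw [hsum, neg_nonneg]
    refine sum_nonpos fun j hj => ?_
    have hj := mem_Ico.1 hj
    have := hb j hj.2
    rw [defect, if_neg (by omega)] at this
    omega

end Defect

section Lattice

variable {n k : ℕ}

-- Vanishes at `m = 0` although `l(a)` has coefficient `1` at `C₀`: that term is split off in
-- `sum_lA_mul`.
def extSeq (a : Fin n → ℤ) (m : ℕ) : ℤ :=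
  if h : 1 ≤ m ∧ m ≤ n then a ⟨m - 1, by omega⟩ else 0

@[simp] theorem extSeq_zero (a : Fin n → ℤ) : extSeq a 0 = 0 := by simp [extSeq]

theorem extSeq_of_lt (a : Fin n → ℤ) {m : ℕ} (h : n < m) : extSeq a m = 0 := by
  simp only [extSeq]; rw [dif_neg (by omega)]

@[simp] theorem extSeq_succ (a : Fin n → ℤ) (j : Fin n) : extSeq a (j + 1) = a j := by
  simp [extSeq]

theorem extSeq_eq_of_boundary {s : ℕ → ℤ} (h0 : s 0 = 0) (hN : s (n + 1) = 0) {m : ℕ}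
    (hm : m ≤ n + 1) : extSeq (fun j : Fin n => s (j + 1)) m = s m := by
  unfold extSeq
  split_ifs with h
  · show s (m - 1 + 1) = s m
    rw [Nat.sub_add_cancel h.1]
  · rcases Nat.eq_zero_or_pos m with rfl | _
    · exact h0.symm
    · rw [show m = n + 1 by omega, hN]

theorem sum_lA_mul (a : Fin n → ℤ) (f : ℕ → ℤ) :
    ∑ p : Fin (n + 1), lA n a p * f p = f 0 + ∑ m ∈ range (n + 1), extSeq a m * f m := by
  rw [Fin.sum_univ_succ, sum_range_succ', extSeq_zero, zero_mul, add_zero,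
    ← Fin.sum_univ_eq_sum_range (fun j => extSeq a (j + 1) * f (j + 1))]
  simp [lA]

theorem qform_single_right {m : ℕ} (g : Fin m → Fin m → ℤ) (x : Fin m → ℤ) (i : Fin m) :
    qform g x (Pi.single i 1) = ∑ p, x p * g p i := by
  simp [qform, Pi.single_apply]

def gramNat (k p q : ℕ) : ℤ :=
  if p = q then (if p = 0 then -1 else -2)
  else if (1 ≤ p ∧ q = p + 1) ∨ (1 ≤ q ∧ p = q + 1) ∨ (p = 0 ∧ q = k) ∨ (q = 0 ∧ p = k) then 1
  else 0

theorem gramA_eq_gramNat (p q : Fin (n + 1)) : gramA n k p q = gramNat k p q := by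
  simp only [gramA, gramNat, Fin.ext_iff]

theorem sum_lA_mul_gramNat (a : Fin n → ℤ) {q : ℕ} (hq : 1 ≤ q) (hqn : q ≤ n) :
    ∑ p : Fin (n + 1), lA n a p * gramNat k p q
      = (if q = k then 1 else 0) + extSeq a (q - 1) + extSeq a (q + 1) - 2 * extSeq a q := by
  have hterm : ∀ m, extSeq a m * gramNat k m q = (if m = q - 1 then extSeq a m else 0)
      + (if m = q + 1 then extSeq a m else 0) - (if m = q then 2 * extSeq a m else 0) := by
    intro m
    rcases Nat.eq_zero_or_pos m with rfl | hm
    · simp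
    · unfold gramNat; split_ifs <;> first | ring1 | omega
  have hnext : (if q + 1 ∈ range (n + 1) then extSeq a (q + 1) else 0) = extSeq a (q + 1) := by
    split_ifs with h
    · rfl
    · rw [extSeq_of_lt a (by simpa using h)]
  rw [sum_lA_mul a (gramNat k · q), sum_congr rfl fun m _ => hterm m, sum_sub_distrib,
    sum_add_distrib, sum_ite_eq', sum_ite_eq', sum_ite_eq', hnext, if_pos (by simp; omega),
    if_pos (by simp; omega)]
  unfold gramNat
  split_ifs <;> first | ring1 | omega | simp_all

theorem sum_lA_mul_gramNat_zero (a : Fin n → ℤ) (hkn : k ≤ n) :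
    ∑ p : Fin (n + 1), lA n a p * gramNat k p 0 = -1 + extSeq a k := by
  have hterm : ∀ m, extSeq a m * gramNat k m 0 = if m = k then extSeq a m else 0 := by
    intro m
    rcases Nat.eq_zero_or_pos m with rfl | hm
    · simp
    · unfold gramNat; split_ifs <;> first | ring1 | omega | simp_all
  rw [sum_lA_mul a (gramNat k · 0), sum_congr rfl fun m _ => hterm m, sum_ite_eq',
    if_pos (by simp; omega)]
  simp [gramNat]

theorem qform_lA_single (a : Fin n → ℤ) {i : Fin (n + 1)} (hi : 1 ≤ (i : ℕ)) :
    qform (gramA n k) (lA n a) (Pi.single i 1)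
      = defect k (extSeq a) (i - 1) - defect k (extSeq a) i := by
  rw [qform_single_right, sum_congr rfl fun p _ => by rw [gramA_eq_gramNat],
    sum_lA_mul_gramNat a hi (by omega), defect, defect, Nat.sub_add_cancel hi]
  split_ifs <;> first | ring1 | omega

theorem qform_lA_self (a : Fin n → ℤ) (hkn : k ≤ n) :
    qform (gramA n k) (lA n a) (lA n a)
      = -1 + 2 * extSeq a k - ∑ j ∈ range (n + 1), (extSeq a (j + 1) - extSeq a j) ^ 2 := by
  let col : ℕ → ℤ := fun q => ∑ p : Fin (n + 1), lA n a p * gramNat k p q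
  have hq : qform (gramA n k) (lA n a) (lA n a) = ∑ q : Fin (n + 1), lA n a q * col q := by
    simp only [qform, col, gramA_eq_gramNat, mul_sum]
    rw [sum_comm]
    exact sum_congr rfl fun q _ => sum_congr rfl fun p _ => by ring
  have hcol : ∀ m ∈ range (n + 1), extSeq a m * col m = (if m = k then extSeq a m else 0)
      + extSeq a m * (extSeq a (m - 1) + extSeq a (m + 1) - 2 * extSeq a m) := by
    intro m hm
    rcases Nat.eq_zero_or_pos m with rfl | hm0
    · simp
    · simp only [col]
      rw [sum_lA_mul_gramNat a hm0 (by simpa [Nat.lt_succ_iff] using hm)]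
      split_ifs <;> ring
  have green := sum_mul_laplacian_add_sum_sq (extSeq a) n
  rw [extSeq_of_lt a (lt_add_one n), zero_mul] at green
  have hcol0 : col 0 = -1 + extSeq a k := sum_lA_mul_gramNat_zero a hkn
  rw [hq, sum_lA_mul, hcol0, sum_congr rfl hcol, sum_add_distrib, sum_ite_eq',
    if_pos (by simp; omega)]
  linear_combination green

theorem mem_IA_iff {a : Fin n → ℤ} (hkn : k ≤ n) :
    a ∈ IA n k ↔ ∀ j < n + 1, defect k (extSeq a) j = 0 ∨ defect k (extSeq a) j = 1 := by
  have hself : qform (gramA n k) (lA n a) (lA n a)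
      = -1 - ∑ j ∈ range (n + 1), defect k (extSeq a) j * (defect k (extSeq a) j - 1) := by
    rw [qform_lA_self a hkn, sum_defect_mul_defect_sub_one (extSeq_zero a)
      (extSeq_of_lt a (lt_add_one n)) (by omega)]
    ring
  have hnonneg : ∀ j ∈ range (n + 1), 0 ≤ defect k (extSeq a) j * (defect k (extSeq a) j - 1) :=
    fun j _ => by nlinarith [Int.le_self_sq (defect k (extSeq a) j)]
  constructor
  · rintro ⟨-, h⟩ j hj
    have := (sum_eq_zero_iff_of_nonneg hnonneg).1 (by linarith) j (mem_range.2 hj)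
    rcases mul_eq_zero.1 this with h | h
    · exact .inl h
    · exact .inr (by linarith)
  · intro h
    refine ⟨fun j => ?_, ?_⟩
    · rw [← extSeq_succ a j]
      exact nonneg_of_defect_eq_zero_or_one (extSeq_zero a) (extSeq_of_lt a (lt_add_one n)) h
        (by omega)
    · rw [hself, sum_eq_zero fun j hj => ?_, sub_zero]
      rcases h j (mem_range.1 hj) with h | h <;> simp [h]

end Lattice

section Indicator

variable {P Q : Prop} [Decidable P] [Decidable Q]

theorem ite_sub_ite_eq_one_iff :
    ((if P then 1 else 0) - (if Q then 1 else 0) : ℤ) = 1 ↔ P ∧ ¬Q := by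
  split_ifs <;> simp_all

theorem ite_sub_ite_eq_neg_one_iff :
    ((if P then 1 else 0) - (if Q then 1 else 0) : ℤ) = -1 ↔ Q ∧ ¬P := by
  split_ifs <;> simp_all

theorem ite_sub_ite_eq_zero_iff :
    ((if P then 1 else 0) - (if Q then 1 else 0) : ℤ) = 0 ↔ (P ↔ Q) := by
  split_ifs <;> simp_all

end Indicator

section Counting

variable {α : Type*} [DecidableEq α] {t : Finset α} {p q : α} {k : ℕ}

theorem filter_powersetCard_notMem (t : Finset α) (q : α) (k : ℕ) :
    {T ∈ powersetCard k t | q ∉ T} = powersetCard k (t.erase q) := by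
  ext T
  simp [subset_erase, and_right_comm]

theorem card_filter_powersetCard_mem_notMem (hp : p ∈ t) (hq : q ∈ t) (hpq : p ≠ q)
    (hk : 1 ≤ k) : #{T ∈ powersetCard k t | p ∈ T ∧ q ∉ T} = (#t - 2).choose (k - 1) := by
  have hfilter : {T ∈ powersetCard k t | p ∈ T ∧ q ∉ T}
      = {T ∈ powersetCard k (t.erase q) | {p} ⊆ T} := by
    rw [← filter_powersetCard_notMem, filter_filter]
    simp only [singleton_subset_iff, and_comm]
  rw [hfilter, card_filter_powersetCard_subset _ _ _ (by simpa using And.intro hpq hp)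
    (by simpa using hk), card_erase_of_mem hq, card_singleton, Nat.sub_sub]

theorem card_filter_powersetCard_notMem_notMem (hp : p ∈ t) (hq : q ∈ t) (hpq : p ≠ q) :
    #{T ∈ powersetCard k t | p ∉ T ∧ q ∉ T} = (#t - 2).choose k := by
  rw [← filter_filter, filter_powersetCard_notMem, filter_powersetCard_notMem, card_powersetCard,
    card_erase_of_mem (mem_erase.2 ⟨hpq.symm, hq⟩), card_erase_of_mem hp, Nat.sub_sub]

theorem card_filter_powersetCard_mem_mem (hp : p ∈ t) (hq : q ∈ t) (hpq : p ≠ q) :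
    #{T ∈ powersetCard k t | p ∈ T ∧ q ∈ T} = if 2 ≤ k then (#t - 2).choose (k - 2) else 0 := by
  have hfilter :
      {T ∈ powersetCard k t | p ∈ T ∧ q ∈ T} = {T ∈ powersetCard k t | {p, q} ⊆ T} := by
    simp only [insert_subset_iff, singleton_subset_iff]
  have hpair : #{p, q} = 2 := card_pair hpq
  rw [hfilter]
  split_ifs with hk
  · rw [card_filter_powersetCard_subset _ _ _ (insert_subset hp (singleton_subset_iff.2 hq))
      (by omega), hpair]
  · refine card_eq_zero.2 (filter_eq_empty_iff.2 fun T hT hsub => hk ?_)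
    rw [← hpair, ← (mem_powersetCard.1 hT).2]
    exact card_le_card hsub

theorem card_filter_powersetCard_mem_iff_mem (hp : p ∈ t) (hq : q ∈ t) (hpq : p ≠ q) :
    #{T ∈ powersetCard k t | (p ∈ T ↔ q ∈ T)}
      = (#t - 2).choose k + if 2 ≤ k then (#t - 2).choose (k - 2) else 0 := by
  rw [← card_filter_powersetCard_notMem_notMem hp hq hpq,
    ← card_filter_powersetCard_mem_mem hp hq hpq,
    ← card_union_of_disjoint (disjoint_filter.2 fun T _ h h' => h.1 h'.1), ← filter_or]
  congr 1
  exact filter_congr fun T _ => by tauto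

end Counting

section Parametrization

variable {n k : ℕ}

def pathSeq (k : ℕ) (S : Finset ℕ) (m : ℕ) : ℤ :=
  ∑ j ∈ range m, ((if j < k then 1 else 0) - (if j ∈ S then 1 else 0))

theorem defect_pathSeq (S : Finset ℕ) (j : ℕ) :
    defect k (pathSeq k S) j = if j ∈ S then 1 else 0 := by
  simp only [defect, pathSeq, sum_range_succ]
  ring

theorem pathSeq_eq_sub_card {N : ℕ} {S : Finset ℕ} (hS : S ⊆ range N) (hk : k ≤ N) :
    pathSeq k S N = k - #S := by
  rw [pathSeq, sum_sub_distrib, sum_boole, sum_boole, filter_mem_eq_inter, inter_eq_right.2 hS,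
    show (range N).filter (· < k) = range k by ext; simp; omega, card_range]

def ofFinset (n k : ℕ) (S : Finset ℕ) : Fin n → ℤ := fun j => pathSeq k S (j + 1)

theorem extSeq_ofFinset {S : Finset ℕ} (hS : S ∈ powersetCard k (range (n + 1))) {m : ℕ}
    (hm : m ≤ n + 1) : extSeq (ofFinset n k S) m = pathSeq k S m := by
  obtain ⟨hsub, rfl⟩ := mem_powersetCard.1 hS
  refine extSeq_eq_of_boundary (by simp [pathSeq]) ?_ hm
  rw [pathSeq_eq_sub_card hsub (by simpa using card_le_card hsub), sub_self]

theorem defect_extSeq_ofFinset {S : Finset ℕ} (hS : S ∈ powersetCard k (range (n + 1)))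
    {j : ℕ} (hj : j < n + 1) : defect k (extSeq (ofFinset n k S)) j = if j ∈ S then 1 else 0 := by
  rw [← defect_pathSeq, defect, defect, extSeq_ofFinset hS hj, extSeq_ofFinset hS hj.le]

theorem ofFinset_mem_IA (hkn : k ≤ n) {S : Finset ℕ}
    (hS : S ∈ powersetCard k (range (n + 1))) :
    ofFinset n k S ∈ IA n k :=
  (mem_IA_iff hkn).2 fun j hj => by rw [defect_extSeq_ofFinset hS hj]; split_ifs <;> simp

theorem injOn_ofFinset : Set.InjOn (ofFinset n k) (powersetCard k (range (n + 1))) := by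
  intro S hS T hT h
  ext j
  by_cases hj : j < n + 1
  · have := defect_extSeq_ofFinset hS hj
    rw [h, defect_extSeq_ofFinset hT hj] at this
    split_ifs at this <;> simp_all
  · have hS' := (mem_powersetCard.1 hS).1
    have hT' := (mem_powersetCard.1 hT).1
    exact iff_of_false (fun h => hj (mem_range.1 (hS' h))) (fun h => hj (mem_range.1 (hT' h)))

theorem exists_ofFinset_eq (hkn : k ≤ n) {a : Fin n → ℤ} (ha : a ∈ IA n k) :
    ∃ S ∈ powersetCard k (range (n + 1)), ofFinset n k S = a := by
  set S := (range (n + 1)).filter (defect k (extSeq a) · = 1)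
  have hdefect : ∀ j < n + 1, defect k (extSeq a) j = if j ∈ S then 1 else 0 := by
    intro j hj
    rcases (mem_IA_iff hkn).1 ha j hj with h | h <;> simp [S, h, hj]
  have hpath : ∀ m ≤ n + 1, extSeq a m = pathSeq k S m := by
    intro m hm
    rw [eq_sum_range_defect (extSeq_zero a) m, pathSeq]
    exact sum_congr rfl fun j hj => by rw [hdefect j (by simp at hj; omega)]
  have hcard : #S = k := by
    have := pathSeq_eq_sub_card (S := S) (k := k) (filter_subset _ _) (by omega)
    rw [← hpath _ le_rfl, extSeq_of_lt a (lt_add_one n)] at this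
    omega
  refine ⟨S, mem_powersetCard.2 ⟨filter_subset _ _, hcard⟩, funext fun j => ?_⟩
  rw [ofFinset, ← hpath _ (by omega), extSeq_succ]

theorem qform_lA_ofFinset {S : Finset ℕ} (hS : S ∈ powersetCard k (range (n + 1)))
    {i : Fin (n + 1)} (hi : 1 ≤ (i : ℕ)) :
    qform (gramA n k) (lA n (ofFinset n k S)) (Pi.single i 1)
      = (if (i : ℕ) - 1 ∈ S then 1 else 0) - (if (i : ℕ) ∈ S then 1 else 0) := by
  rw [qform_lA_single _ hi, defect_extSeq_ofFinset hS (by omega),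
    defect_extSeq_ofFinset hS i.isLt]

theorem ncard_IA_filter_qform_eq (hkn : k ≤ n) {i : Fin (n + 1)} (hi : 1 ≤ (i : ℕ)) (c : ℤ) :
    {a ∈ IA n k | qform (gramA n k) (lA n a) (Pi.single i 1) = c}.ncard
      = #{S ∈ powersetCard k (range (n + 1)) |
          (if (i : ℕ) - 1 ∈ S then 1 else 0) - (if (i : ℕ) ∈ S then 1 else 0) = c} := by
  have himage : {a ∈ IA n k | qform (gramA n k) (lA n a) (Pi.single i 1) = c}
      = ofFinset n k '' ↑{S ∈ powersetCard k (range (n + 1)) |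
          (if (i : ℕ) - 1 ∈ S then 1 else 0) - (if (i : ℕ) ∈ S then 1 else 0) = c} := by
    ext a
    constructor
    · rintro ⟨ha, hc⟩
      obtain ⟨S, hS, rfl⟩ := exists_ofFinset_eq hkn ha
      rw [qform_lA_ofFinset hS hi] at hc
      exact ⟨S, mem_coe.2 (mem_filter.2 ⟨hS, hc⟩), rfl⟩
    · rintro ⟨S, hS, rfl⟩
      rw [mem_coe, mem_filter] at hS
      exact ⟨ofFinset_mem_IA hkn hS.1, by rw [qform_lA_ofFinset hS.1 hi, hS.2]⟩
  rw [himage, Set.InjOn.ncard_image (injOn_ofFinset.mono (coe_subset.2 (filter_subset _ _))),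
    Set.ncard_coe_finset]

end Parametrization

end AnCkLattice

theorem stmt6_general (n k : ℕ) (hk1 : 1 ≤ k) (hkn : k ≤ n)
    (i : Fin (n + 1)) (hi : 1 ≤ (i : ℕ)) :
    (∀ a ∈ IA n k, qform (gramA n k) (lA n a) (Pi.single i 1) ∈ ({-1, 0, 1} : Set ℤ))
    ∧ {a ∈ IA n k | qform (gramA n k) (lA n a) (Pi.single i 1) = 1}.ncard
        = Nat.choose (n - 1) (k - 1)
    ∧ {a ∈ IA n k | qform (gramA n k) (lA n a) (Pi.single i 1) = -1}.ncard
        = Nat.choose (n - 1) (k - 1)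
    ∧ {a ∈ IA n k | qform (gramA n k) (lA n a) (Pi.single i 1) = 0}.ncard
        = Nat.choose (n - 1) k + (if 2 ≤ k then Nat.choose (n - 1) (k - 2) else 0) :=
  open AnCkLattice Finset in by
  have hprev : (i : ℕ) - 1 ∈ range (n + 1) := mem_range.2 (by omega)
  have hcur : (i : ℕ) ∈ range (n + 1) := mem_range.2 i.isLt
  have hne : (i : ℕ) - 1 ≠ i := by omega
  have hcard : (range (n + 1)).card - 2 = n - 1 := by simp
  refine ⟨fun a ha => ?_, ?_, ?_, ?_⟩
  · obtain ⟨S, hS, rfl⟩ := exists_ofFinset_eq hkn ha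
    rw [qform_lA_ofFinset hS hi]
    split_ifs <;> simp
  · rw [ncard_IA_filter_qform_eq hkn hi, ← hcard,
      ← card_filter_powersetCard_mem_notMem hprev hcur hne hk1]
    simp only [ite_sub_ite_eq_one_iff]
  · rw [ncard_IA_filter_qform_eq hkn hi, ← hcard,
      ← card_filter_powersetCard_mem_notMem hcur hprev hne.symm hk1]
    simp only [ite_sub_ite_eq_neg_one_iff]
  · rw [ncard_IA_filter_qform_eq hkn hi, ← hcard,
      ← card_filter_powersetCard_mem_iff_mem hprev hcur hne]
    simp only [ite_sub_ite_eq_zero_iff]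

/-- in the `(Aₙ, C_k)` lattice, for every index `i` with `1 ≤ i ≤ n`:
`⟨l(a), Cᵢ⟩ ∈ {-1,0,1}` for every `a ∈ I`; the number of `a ∈ I` with `⟨l(a), Cᵢ⟩ = 1`
equals `(n-1).choose (k-1)`, likewise for `⟨l(a), Cᵢ⟩ = -1`, and the number with
`⟨l(a), Cᵢ⟩ = 0` equals `(n-1).choose k + (n-1).choose (k-2)`, binomial coefficients with
a negative lower index being `0`. -/
theorem stmt6 (n k : ℕ) (hn : 1 ≤ n) (hk1 : 1 ≤ k) (hkn : k ≤ n)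
    (i : Fin (n + 1)) (hi : 1 ≤ (i : ℕ)) :
    (∀ a ∈ IA n k, qform (gramA n k) (lA n a) (Pi.single i 1) ∈ ({-1, 0, 1} : Set ℤ))
    ∧ {a ∈ IA n k | qform (gramA n k) (lA n a) (Pi.single i 1) = 1}.ncard
        = Nat.choose (n - 1) (k - 1)
    ∧ {a ∈ IA n k | qform (gramA n k) (lA n a) (Pi.single i 1) = -1}.ncard
        = Nat.choose (n - 1) (k - 1)
    ∧ {a ∈ IA n k | qform (gramA n k) (lA n a) (Pi.single i 1) = 0}.ncard
        = Nat.choose (n - 1) k + (if 2 ≤ k then Nat.choose (n - 1) (k - 2) else 0) :=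
  stmt6_general n k hk1 hkn i hi
end

section
/- For every integer n ≥ 4 and all integers a_1, …, a_n, one has a_1 + Σ_{i=1}^{n−2} a_i·a_{i+1} + a_{n−2}·a_n ≤ Σ_{i=1}^n a_i². Equivalently, in the (D_n, C_1) lattice every class of the form l(a) = C_0 + Σ_{i=1}^n a_i C_i with integer coefficients satisfies ⟨l(a), l(a)⟩ ≤ −1. -/
/-! Completing squares along the diagram: writing `D(a) = ∑ aᵢ² - a₁ - ∑ aᵢaᵢ₊₁ - a_{n-2}aₙ`,
`2 D(a) = (a₁ - 1)² - 1 + ∑_{i=2}^{n-2} (aᵢ - aᵢ₋₁)² + (a_{n-1} + aₙ - a_{n-2})² + (aₙ - a_{n-1})²`,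
so the integer `D(a)` satisfies `2 D(a) ≥ -1`, hence `D(a) ≥ 0`. Expanding the Gram matrix gives
`⟨l(a), l(a)⟩ = -1 - 2 D(a)`. -/

/-- The Gram matrix of the `(Dₙ, C_k)` lattice: basis `C₀, C₁, …, Cₙ` (index `i : Fin (n+1)`
corresponds to `Cᵢ`), with `⟨C₀,C₀⟩ = -1`, `⟨Cᵢ,Cᵢ⟩ = -2` for `1 ≤ i ≤ n`,
`⟨Cᵢ,Cᵢ₊₁⟩ = 1` for `1 ≤ i ≤ n-2`, `⟨C_{n-2},Cₙ⟩ = 1`, `⟨C₀,C_k⟩ = 1`, and all other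
off-diagonal entries `0`. -/
def gramD (n k : ℕ) (i j : Fin (n + 1)) : ℤ :=
  if i = j then (if (i : ℕ) = 0 then -1 else -2)
  else if (1 ≤ (i : ℕ) ∧ (j : ℕ) = (i : ℕ) + 1 ∧ (j : ℕ) < n)
      ∨ (1 ≤ (j : ℕ) ∧ (i : ℕ) = (j : ℕ) + 1 ∧ (i : ℕ) < n)
      ∨ ((i : ℕ) = n - 2 ∧ (j : ℕ) = n) ∨ ((j : ℕ) = n - 2 ∧ (i : ℕ) = n)
      ∨ ((i : ℕ) = 0 ∧ (j : ℕ) = k) ∨ ((j : ℕ) = 0 ∧ (i : ℕ) = k) then 1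
  else 0

/-- The class `l(a) = C₀ + ∑ aᵢ Cᵢ`, as a coordinate vector. -/
def lD (n : ℕ) (a : Fin n → ℤ) : Fin (n + 1) → ℤ := Fin.cons 1 a

/-- The set `I` of coefficient tuples `a ∈ ℤⁿ` with all `aᵢ ≥ 0` and `⟨l(a), l(a)⟩ = -1`. -/
def ID (n k : ℕ) : Set (Fin n → ℤ) :=
  {a | (∀ i, 0 ≤ a i) ∧ qform (gramD n k) (lD n a) (lD n a) = -1}

open Finset

lemma two_mul_sum_sq_sub_two_mul_sum_mul_succ (a : ℕ → ℤ) (k : ℕ) :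
    2 * ∑ i ∈ Icc 1 (k + 1), a i ^ 2 - 2 * ∑ i ∈ Icc 1 k, a i * a (i + 1)
      = a 1 ^ 2 + a (k + 1) ^ 2 + ∑ i ∈ Icc 1 k, (a (i + 1) - a i) ^ 2 := by
  induction k with
  | zero =>
    rw [zero_add, Icc_self, sum_singleton, Icc_eq_empty (by omega), sum_empty, sum_empty]
    ring
  | succ k ih =>
    rw [sum_Icc_succ_top (show 1 ≤ k + 1 + 1 by omega)]
    simp only [sum_Icc_succ_top (show 1 ≤ k + 1 by omega)] at ih ⊢
    linear_combination ih

lemma add_sum_mul_succ_add_mul_le_sum_sq (n : ℕ) (hn : 4 ≤ n) (a : ℕ → ℤ) :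
    a 1 + ∑ i ∈ Icc 1 (n - 2), a i * a (i + 1) + a (n - 2) * a n ≤ ∑ i ∈ Icc 1 n, a i ^ 2 := by
  obtain ⟨m, rfl⟩ : ∃ m, n = m + 4 := ⟨n - 4, by omega⟩
  have hpath := two_mul_sum_sq_sub_two_mul_sum_mul_succ a (m + 1)
  rw [show m + 4 - 2 = m + 1 + 1 by omega, sum_Icc_succ_top (b := m + 1) (by omega),
    sum_Icc_succ_top (b := m + 3) (by omega), sum_Icc_succ_top (b := m + 2) (by omega)]
  have hdiff : 0 ≤ ∑ i ∈ Icc 1 (m + 1), (a (i + 1) - a i) ^ 2 :=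
    sum_nonneg fun i _ => sq_nonneg _
  nlinarith [sq_nonneg (a 1 - 1), sq_nonneg (a (m + 3) + a (m + 4) - a (m + 2)),
    sq_nonneg (a (m + 4) - a (m + 3))]

lemma sum_sum_ite_mem_eq_sum {α β M : Type*} [DecidableEq α] [DecidableEq β] [AddCommMonoid M]
    {s : Finset α} {t : Finset β} {E : Finset (α × β)} (hE : E ⊆ s ×ˢ t) (f : α → β → M) :
    ∑ i ∈ s, ∑ j ∈ t, (if (i, j) ∈ E then f i j else 0) = ∑ e ∈ E, f e.1 e.2 := by
  rw [← sum_product' (f := fun i j => if (i, j) ∈ E then f i j else 0), ← sum_filter,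
    filter_mem_eq_inter, inter_eq_right.mpr hE]

lemma qform_eq_sum_range {m : ℕ} (g : Fin m → Fin m → ℤ) (G : ℕ → ℕ → ℤ) (x y : Fin m → ℤ)
    (b c : ℕ → ℤ) (hg : ∀ i j, g i j = G i j) (hx : ∀ i, x i = b i) (hy : ∀ j, y j = c j) :
    qform g x y = ∑ i ∈ range m, ∑ j ∈ range m, b i * G i j * c j := by
  simp only [qform, hg, hx, hy]
  rw [← Fin.sum_univ_eq_sum_range (fun i => ∑ j ∈ range m, b i * G i j * c j)]
  simp only [← Fin.sum_univ_eq_sum_range (fun j => b _ * G _ j * c j)]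

-- The edges of the diagram of `(Dₙ, C₁)` on the indices of `C₀, …, Cₙ`, each as `(i, j)` with `i < j`.
def dEdges (n : ℕ) : Finset (ℕ × ℕ) :=
  insert (0, 1) (insert (n - 2, n) ((Icc 1 (n - 2)).image fun i => (i, i + 1)))

lemma mem_dEdges {n p q : ℕ} :
    (p, q) ∈ dEdges n ↔ p = 0 ∧ q = 1 ∨ p = n - 2 ∧ q = n ∨ 1 ≤ p ∧ p ≤ n - 2 ∧ q = p + 1 := by
  simp only [dEdges, mem_insert, mem_image, mem_Icc, Prod.mk.injEq]
  constructor
  · rintro (h | h | ⟨i, hi, rfl, rfl⟩) <;> omega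
  · rintro (h | h | ⟨h1, h2, rfl⟩)
    · exact Or.inl h
    · exact Or.inr (Or.inl h)
    · exact Or.inr (Or.inr ⟨p, ⟨h1, h2⟩, rfl, rfl⟩)

lemma dEdges_subset {n : ℕ} (hn : 1 ≤ n) : dEdges n ⊆ range (n + 1) ×ˢ range (n + 1) := by
  rintro ⟨p, q⟩ he
  rw [mem_dEdges] at he
  simp only [mem_product, mem_range]
  omega

lemma sum_dEdges {n : ℕ} (hn : 4 ≤ n) (b : ℕ → ℤ) :
    ∑ e ∈ dEdges n, b e.1 * b e.2
      = b 0 * b 1 + b (n - 2) * b n + ∑ i ∈ Icc 1 (n - 2), b i * b (i + 1) := by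
  rw [dEdges, sum_insert, sum_insert, sum_image]
  · ring
  all_goals simp
  all_goals omega

def gramDOne (n i j : ℕ) : ℤ :=
  (if i = j then (if i = 0 then -1 else -2) else 0)
    + (if (i, j) ∈ dEdges n then 1 else 0) + (if (j, i) ∈ dEdges n then 1 else 0)

lemma gramD_one_apply (n : ℕ) (hn : 4 ≤ n) (i j : Fin (n + 1)) :
    gramD n 1 i j = gramDOne n i j := by
  simp only [gramD, gramDOne, mem_dEdges, Fin.ext_iff]
  split_ifs <;> omega

def lDNat (n : ℕ) (a : Fin n → ℤ) (k : ℕ) : ℤ :=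
  if h : k < n + 1 then lD n a ⟨k, h⟩ else 0

lemma lDNat_coe (n : ℕ) (a : Fin n → ℤ) (i : Fin (n + 1)) : lD n a i = lDNat n a i := by
  simp [lDNat, i.isLt]

lemma lDNat_zero (n : ℕ) (a : Fin n → ℤ) : lDNat n a 0 = 1 := by
  simp [lDNat, lD]

lemma sum_sum_mul_diag_mul (n : ℕ) (b : ℕ → ℤ) :
    ∑ i ∈ range (n + 1), ∑ j ∈ range (n + 1),
        b i * (if i = j then (if i = 0 then -1 else -2) else 0) * b j
      = -b 0 ^ 2 - 2 * ∑ i ∈ Icc 1 n, b i ^ 2 := by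
  have hrow : ∀ i ∈ range (n + 1), ∑ j ∈ range (n + 1),
      b i * (if i = j then (if i = 0 then -1 else -2) else 0) * b j
        = (if i = 0 then -1 else -2) * b i ^ 2 := by
    intro i hi
    simp only [mul_ite, ite_mul, mul_zero, zero_mul, sum_ite_eq, hi, if_true]
    split_ifs <;> ring
  have hpos : ∀ i ∈ Icc 1 n, (if i = 0 then (-1 : ℤ) else -2) * b i ^ 2 = -2 * b i ^ 2 :=
    fun i hi => by rw [if_neg (by simp at hi; omega)]
  rw [sum_congr rfl hrow, range_eq_Ico, sum_eq_sum_Ico_succ_bot (by omega),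
    Ico_add_one_right_eq_Icc, sum_congr rfl hpos, ← mul_sum, if_pos rfl]
  ring

lemma qform_gramD_one_lD {n : ℕ} (hn : 4 ≤ n) (a : Fin n → ℤ) :
    qform (gramD n 1) (lD n a) (lD n a)
      = -1 - 2 * ∑ i ∈ Icc 1 n, lDNat n a i ^ 2
        + 2 * (lDNat n a 1 + ∑ i ∈ Icc 1 (n - 2), lDNat n a i * lDNat n a (i + 1)
          + lDNat n a (n - 2) * lDNat n a n) := by
  set b := lDNat n a
  rw [qform_eq_sum_range _ _ _ _ b b (gramD_one_apply n hn) (lDNat_coe n a) (lDNat_coe n a)]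
  simp only [gramDOne, mul_add, add_mul, sum_add_distrib, sum_sum_mul_diag_mul]
  have hedges : ∑ i ∈ range (n + 1), ∑ j ∈ range (n + 1),
      b i * (if (i, j) ∈ dEdges n then 1 else 0) * b j
        = b 0 * b 1 + b (n - 2) * b n + ∑ i ∈ Icc 1 (n - 2), b i * b (i + 1) := by
    simp only [mul_ite, ite_mul, mul_zero, zero_mul, mul_one]
    rw [sum_sum_ite_mem_eq_sum (dEdges_subset (by omega)) (fun i j => b i * b j), sum_dEdges hn]
  have hsymm : ∑ i ∈ range (n + 1), ∑ j ∈ range (n + 1),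
      b i * (if (j, i) ∈ dEdges n then 1 else 0) * b j
        = ∑ i ∈ range (n + 1), ∑ j ∈ range (n + 1),
          b i * (if (i, j) ∈ dEdges n then 1 else 0) * b j := by
    rw [sum_comm]
    exact sum_congr rfl fun _ _ => sum_congr rfl fun _ _ => by ring
  have hb0 : b 0 = 1 := lDNat_zero n a
  rw [hsymm, hedges, hb0]
  ring

/-- for every `n ≥ 4` and all integers `a₁, …, aₙ`,
`a₁ + ∑_{i=1}^{n-2} aᵢ·aᵢ₊₁ + a_{n-2}·aₙ ≤ ∑_{i=1}^n aᵢ²`; equivalently, in the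
`(Dₙ, C₁)` lattice every class `l(a) = C₀ + ∑ aᵢ Cᵢ` satisfies `⟨l(a), l(a)⟩ ≤ -1`. -/
theorem stmt7 (n : ℕ) (hn : 4 ≤ n) :
    (∀ a : ℕ → ℤ,
      a 1 + (∑ i ∈ Finset.Icc 1 (n - 2), a i * a (i + 1)) + a (n - 2) * a n
        ≤ ∑ i ∈ Finset.Icc 1 n, (a i) ^ 2)
    ∧ ∀ a : Fin n → ℤ, qform (gramD n 1) (lD n a) (lD n a) ≤ -1 := by
  refine ⟨add_sum_mul_succ_add_mul_le_sum_sq n hn, fun a => ?_⟩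
  have hD := add_sum_mul_succ_add_mul_le_sum_sq n hn (lDNat n a)
  rw [qform_gramD_one_lD hn a]
  linarith
end

section
/- In the (D_n, C_1) lattice with I = { a ∈ ℤ^n : a_i ≥ 0 and ⟨l(a), l(a)⟩ = −1 } and F := 2C_0 + 2Σ_{i=1}^{n−2} C_i + C_{n−1} + C_n: (i) for distinct a, a' ∈ I, ⟨l(a), l(a')⟩ ∈ {0, 1}; (ii) for each a ∈ I there is exactly one a' ∈ I with ⟨l(a), l(a')⟩ = 1, and for this a' one has l(a) + l(a') = F; (iii) ⟨F, F⟩ = 0, ⟨F, C_i⟩ = 0 for every 1 ≤ i ≤ n, and ⟨F, l(a)⟩ = 0 for every a ∈ I. -/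
/-- `F = 2C₀ + 2∑_{i=1}^{n-2} Cᵢ + C_{n-1} + Cₙ`, as a coordinate vector. -/
def Fvec (n : ℕ) : Fin (n + 1) → ℤ :=
  fun i => if (i : ℕ) = 0 then 2 else if (i : ℕ) + 2 ≤ n then 2 else 1

/-!
Writing `u₀(x) = x₁ - x₀, …, u_{n-3}(x) = x_{n-2} - x_{n-3}, u_{n-2}(x) = x_{n-1} - x_{n-2} + xₙ,
u_{n-1}(x) = xₙ - x_{n-1}`, the form is `⟨x, y⟩ = -∑ₖ uₖ(x) uₖ(y)`: it is negative semidefinite,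
`u(F) = 0`, and `x` is recovered from `x₀` and `u(x)` by telescoping. So for `l, l' ∈ I`,
semidefiniteness applied to `l - l'` and `l + l' - F` gives `0 ≤ ⟨l, l'⟩ ≤ 1`, and `⟨l, l'⟩ = 1`
forces `l + l' = F`. For `l ∈ I` the integer vector `u(l)` has `∑ uₖ² = 1`, which bounds the
coordinates of `l` by those of `F`; hence `F - l` lies in `I` and is the partner of `l`.
-/

open Finset Matrix Fin.NatCast

section

variable {M : Type*} [AddCommGroup M]

structure IsNegSemidefWithRadical (B : LinearMap.BilinForm ℤ M) (φ : M →ₗ[ℤ] ℤ) (F : M) :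
    Prop where
  isSymm : B.IsSymm
  nonpos : ∀ x, B x x ≤ 0
  eq_zero : ∀ x, φ x = 0 → B x x = 0 → x = 0
  apply_radical : ∀ x, B x F = 0
  map_radical : φ F = 2

def IsExceptional (B : LinearMap.BilinForm ℤ M) (φ : M →ₗ[ℤ] ℤ) (l : M) : Prop :=
  φ l = 1 ∧ B l l = -1

namespace IsNegSemidefWithRadical

variable {B : LinearMap.BilinForm ℤ M} {φ : M →ₗ[ℤ] ℤ} {F l l' : M}

theorem radical_apply (h : IsNegSemidefWithRadical B φ F) (y : M) : B F y = 0 := by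
  rw [h.isSymm.eq, h.apply_radical]

theorem apply_sub_sub (h : IsNegSemidefWithRadical B φ F) (x y : M) :
    B (x - y) (x - y) = B x x - 2 * B x y + B y y := by
  simp only [map_sub, LinearMap.sub_apply, h.isSymm.eq y x]
  ring

theorem apply_add_sub_radical (h : IsNegSemidefWithRadical B φ F) (x y : M) :
    B (x + y - F) (x + y - F) = B x x + 2 * B x y + B y y := by
  simp only [map_sub, map_add, LinearMap.sub_apply, LinearMap.add_apply, h.apply_radical,
    h.radical_apply, h.isSymm.eq y x]
  ring

theorem pairing_eq_zero_or_eq_one (h : IsNegSemidefWithRadical B φ F)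
    (hl : IsExceptional B φ l) (hl' : IsExceptional B φ l') (hne : l ≠ l') :
    B l l' = 0 ∨ B l l' = 1 := by
  have hdiff : B (l - l') (l - l') ≠ 0 := fun h0 =>
    hne (sub_eq_zero.1 (h.eq_zero _ (by rw [map_sub, hl.1, hl'.1, sub_self]) h0))
  have h₁ := h.nonpos (l - l')
  have h₂ := h.nonpos (l + l' - F)
  rw [h.apply_sub_sub] at h₁ hdiff
  rw [h.apply_add_sub_radical] at h₂
  rw [hl.2, hl'.2] at h₁ h₂ hdiff
  omega

theorem add_eq_of_pairing_eq_one (h : IsNegSemidefWithRadical B φ F)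
    (hl : IsExceptional B φ l) (hl' : IsExceptional B φ l') (h1 : B l l' = 1) :
    l + l' = F := by
  refine sub_eq_zero.1 (h.eq_zero _ ?_ ?_)
  · rw [map_sub, map_add, hl.1, hl'.1, h.map_radical]; rfl
  · rw [h.apply_add_sub_radical, hl.2, hl'.2, h1]; rfl

theorem isExceptional_radical_sub (h : IsNegSemidefWithRadical B φ F)
    (hl : IsExceptional B φ l) : IsExceptional B φ (F - l) := by
  refine ⟨by rw [map_sub, h.map_radical, hl.1]; rfl, ?_⟩
  rw [← hl.2, h.apply_sub_sub, h.radical_apply, h.radical_apply]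
  ring

theorem apply_radical_sub (h : IsNegSemidefWithRadical B φ F)
    (hl : IsExceptional B φ l) : B l (F - l) = 1 := by
  rw [map_sub, h.apply_radical, hl.2]; rfl

end IsNegSemidefWithRadical

end

theorem sum_range_ite_add_eq (n c a : ℕ) (f : ℕ → ℤ) :
    ∑ k ∈ range n, (if k + c = a then f k else 0) =
      if c ≤ a ∧ a < n + c then f (a - c) else 0 := by
  induction n with
  | zero => simp
  | succ n ih =>
    rw [sum_range_succ, ih]
    split_ifs <;> first | omega | (subst_vars; simp)

def gramFactorEntry (n k i : ℕ) : ℤ :=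
  (if k + 1 = i then 1 else 0) - (if k = i then 1 else 0)
    + (if k + 2 = n then if i = n then 1 else 0 else 0)

def gramFactor (n : ℕ) : Matrix (Fin n) (Fin (n + 1)) ℤ :=
  Matrix.of fun k i => gramFactorEntry n k i

-- The `ℕ`-indices are cast into `Fin (n + 1)`, which wraps around: only `k < n` is meaningful.
def factorCoord (n : ℕ) (x : Fin (n + 1) → ℤ) (k : ℕ) : ℤ :=
  x (k + 1 : ℕ) - x k + if k + 2 = n then x n else 0

theorem gramFactor_transpose_mul_self {n : ℕ} (hn : 3 ≤ n) :
    (gramFactor n)ᵀ * gramFactor n = -Matrix.of (gramD n 1) := by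
  ext i j
  simp only [mul_apply, transpose_apply, gramFactor, of_apply, neg_apply]
  rw [Fin.sum_univ_eq_sum_range (fun k => gramFactorEntry n k i * gramFactorEntry n k j)]
  simp only [gramFactorEntry, mul_add, mul_sub, mul_ite, mul_one, mul_zero, sum_add_distrib,
    sum_sub_distrib, sum_range_ite_add_eq, sum_ite_eq', mem_range]
  have := i.isLt
  have := j.isLt
  unfold gramD
  simp only [Fin.ext_iff]
  generalize (i : ℕ) = a at *
  generalize (j : ℕ) = b at *
  -- the nodes `C₀`, the inner chain, the branch node `C_{n-2}` and the two leaves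
  obtain ha | ha | ha | ha | ha :
    a = 0 ∨ (1 ≤ a ∧ a + 3 ≤ n) ∨ a = n - 2 ∨ a = n - 1 ∨ a = n := by omega
  all_goals obtain hb | hb | hb | hb | hb :
    b = 0 ∨ (1 ≤ b ∧ b + 3 ≤ n) ∨ b = n - 2 ∨ b = n - 1 ∨ b = n := by omega
  all_goals simp (disch := omega) only [if_pos, if_neg]
  all_goals (try split_ifs) <;> omega

theorem gramFactor_mulVec {n : ℕ} (x : Fin (n + 1) → ℤ) (k : Fin n) :
    (gramFactor n *ᵥ x) k = factorCoord n x k := by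
  trans ∑ j ∈ range (n + 1), gramFactorEntry n k j * x j
  · simp [mulVec, dotProduct, gramFactor, Finset.sum_range]
  simp only [gramFactorEntry, factorCoord, sub_mul, add_mul, ite_mul, one_mul, zero_mul,
    sum_add_distrib, sum_sub_distrib, sum_ite_eq, mem_range]
  have := k.isLt
  simp (disch := omega) only [if_pos]
  split_ifs <;> simp

def dnForm (n : ℕ) : LinearMap.BilinForm ℤ (Fin (n + 1) → ℤ) :=
  Matrix.toLinearMap₂' ℤ (Matrix.of (gramD n 1))

theorem qform_gramD_one_eq_dnForm (n : ℕ) (x y : Fin (n + 1) → ℤ) :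
    qform (gramD n 1) x y = dnForm n x y := by
  simp only [qform, dnForm, toLinearMap₂'_apply, of_apply, smul_eq_mul]
  exact sum_congr rfl fun i _ => sum_congr rfl fun j _ => by ring

theorem dnForm_apply {n : ℕ} (hn : 3 ≤ n) (x y : Fin (n + 1) → ℤ) :
    dnForm n x y = -∑ k ∈ range n, factorCoord n x k * factorCoord n y k := by
  rw [dnForm, toLinearMap₂'_apply', ← neg_neg (Matrix.of (gramD n 1)),
    ← gramFactor_transpose_mul_self hn, neg_mulVec, ← mulVec_mulVec, dotProduct_neg,
    dotProduct_mulVec, vecMul_transpose]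
  simp [dotProduct, gramFactor_mulVec, Finset.sum_range]

theorem Fvec_natCast {n j : ℕ} (hj : j ≤ n) :
    Fvec n j = if j = 0 then 2 else if j + 2 ≤ n then 2 else 1 := by
  simp [Fvec, Fin.val_cast_of_lt (Nat.lt_succ_of_le hj)]

theorem factorCoord_Fvec {n k : ℕ} (hn : 2 ≤ n) (hk : k < n) :
    factorCoord n (Fvec n) k = 0 := by
  rw [factorCoord, Fvec_natCast (by omega), Fvec_natCast (by omega), Fvec_natCast le_rfl]
  obtain hk' | hk' | hk' : k + 2 < n ∨ k + 2 = n ∨ k + 1 = n := by omega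
  all_goals simp (disch := omega) only [if_pos, if_neg, ite_self]
  all_goals norm_num

theorem sub_apply_zero_eq_sum_factorCoord {n j : ℕ} (hj : j + 2 ≤ n) (x : Fin (n + 1) → ℤ) :
    x j - x 0 = ∑ k ∈ range j, factorCoord n x k := by
  rw [show x 0 = x (0 : ℕ) by simp, ← sum_range_sub (fun k : ℕ => x k)]
  refine sum_congr rfl fun k hk => ?_
  rw [factorCoord, if_neg (by simp at hk; omega), add_zero]

theorem Int.abs_le_self_sq (z : ℤ) : |z| ≤ z ^ 2 := by
  rw [Int.abs_eq_natAbs]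
  exact Int.natAbs_le_self_sq z

theorem abs_sum_le_sum_sq {ι : Type*} (s : Finset ι) (u : ι → ℤ) :
    |∑ k ∈ s, u k| ≤ ∑ k ∈ s, u k ^ 2 :=
  (abs_sum_le_sum_abs _ _).trans (sum_le_sum fun k _ => Int.abs_le_self_sq (u k))

theorem two_mul_apply_sub_apply_zero_eq_sub {m : ℕ} (x : Fin (m + 2 + 1) → ℤ) :
    2 * x (m + 1 : ℕ) - x 0 =
      ∑ k ∈ range (m + 1), factorCoord (m + 2) x k - factorCoord (m + 2) x (m + 1) := by
  rw [sum_range_succ, ← sub_apply_zero_eq_sum_factorCoord le_rfl]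
  simp only [factorCoord, ↓reduceIte, if_neg (by omega : m + 1 + 2 ≠ m + 2)]
  ring

theorem two_mul_apply_sub_apply_zero_eq_sum {m : ℕ} (x : Fin (m + 2 + 1) → ℤ) :
    2 * x (m + 2 : ℕ) - x 0 = ∑ k ∈ range (m + 2), factorCoord (m + 2) x k := by
  rw [sum_range_succ, sum_range_succ, ← sub_apply_zero_eq_sum_factorCoord le_rfl]
  simp only [factorCoord, ↓reduceIte, if_neg (by omega : m + 1 + 2 ≠ m + 2)]
  ring

theorem abs_two_mul_sub_Fvec_mul_le {n : ℕ} (hn : 2 ≤ n) (x : Fin (n + 1) → ℤ)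
    (i : Fin (n + 1)) :
    |2 * x i - Fvec n i * x 0| ≤ Fvec n i * ∑ k ∈ range n, factorCoord n x k ^ 2 := by
  obtain ⟨j, hj, rfl⟩ : ∃ j ≤ n, (j : Fin (n + 1)) = i := ⟨i, i.is_le, Fin.cast_val_eq_self i⟩
  rw [Fvec_natCast hj]
  obtain ⟨m, rfl⟩ : ∃ m, n = m + 2 := ⟨n - 2, by omega⟩
  rcases (by omega : j + 2 ≤ m + 2 ∨ j = m + 1 ∨ j = m + 2) with hj' | rfl | rfl
  · rw [if_pos hj', ite_self, ← mul_sub, sub_apply_zero_eq_sum_factorCoord hj', abs_mul, abs_two]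
    gcongr
    exact (abs_sum_le_sum_sq _ _).trans
      (sum_le_sum_of_subset_of_nonneg (range_mono (by omega)) fun _ _ _ => sq_nonneg _)
  · rw [if_neg (by omega), if_neg (by omega), one_mul, one_mul, two_mul_apply_sub_apply_zero_eq_sub,
      sum_range_succ _ (m + 1)]
    linarith [abs_sub (∑ k ∈ range (m + 1), factorCoord (m + 2) x k) (factorCoord (m + 2) x (m + 1)),
      abs_sum_le_sum_sq (range (m + 1)) (factorCoord (m + 2) x),
      Int.abs_le_self_sq (factorCoord (m + 2) x (m + 1))]
  · rw [if_neg (by omega), if_neg (by omega), one_mul, one_mul, two_mul_apply_sub_apply_zero_eq_sum]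
    exact abs_sum_le_sum_sq _ _

theorem isNegSemidefWithRadical_dnForm {n : ℕ} (hn : 3 ≤ n) :
    IsNegSemidefWithRadical (dnForm n) (LinearMap.proj 0) (Fvec n) where
  isSymm := ⟨fun x y => by simp only [dnForm_apply hn, mul_comm]⟩
  nonpos x := by
    rw [dnForm_apply hn, neg_nonpos]
    exact sum_nonneg fun k _ => mul_self_nonneg _
  eq_zero x hx hxx := by
    funext i
    have := abs_two_mul_sub_Fvec_mul_le (by omega) x i
    rw [dnForm_apply hn, neg_eq_zero] at hxx
    simp only [LinearMap.proj_apply] at hx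
    simp only [hx, sq, hxx, mul_zero, sub_zero, abs_nonpos_iff] at this
    simpa using this
  apply_radical x := by
    rw [dnForm_apply hn, neg_eq_zero]
    exact sum_eq_zero fun k hk => by rw [factorCoord_Fvec (by omega) (mem_range.1 hk), mul_zero]
  map_radical := by simp [Fvec]

theorem le_Fvec_of_isExceptional {n : ℕ} (hn : 3 ≤ n) {x : Fin (n + 1) → ℤ}
    (hx : IsExceptional (dnForm n) (LinearMap.proj 0) x) (i : Fin (n + 1)) : x i ≤ Fvec n i := by
  obtain ⟨hx0, hxx⟩ := hx
  have := abs_two_mul_sub_Fvec_mul_le (by omega) x i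
  rw [dnForm_apply hn, neg_inj] at hxx
  simp only [LinearMap.proj_apply] at hx0
  simp only [hx0, sq, hxx, mul_one] at this
  linarith [le_abs_self (2 * x i - Fvec n i)]

theorem lD_injective (n : ℕ) : Function.Injective (lD n) :=
  Fin.cons_right_injective (α := fun _ : Fin (n + 1) => ℤ) 1

theorem isExceptional_lD_of_mem_ID {n : ℕ} {a : Fin n → ℤ} (ha : a ∈ ID n 1) :
    IsExceptional (dnForm n) (LinearMap.proj 0) (lD n a) :=
  ⟨by simp [lD], by rw [← qform_gramD_one_eq_dnForm]; exact ha.2⟩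

def partner (n : ℕ) (a : Fin n → ℤ) : Fin n → ℤ := Fin.tail (Fvec n - lD n a)

theorem lD_partner (n : ℕ) (a : Fin n → ℤ) : lD n (partner n a) = Fvec n - lD n a := by
  rw [partner, lD, ← Fin.cons_self_tail (Fvec n - lD n a)]
  simp [lD, Fvec]

theorem partner_mem_ID {n : ℕ} (hn : 3 ≤ n) {a : Fin n → ℤ} (ha : a ∈ ID n 1) :
    partner n a ∈ ID n 1 := by
  have hl := isExceptional_lD_of_mem_ID ha
  refine ⟨fun i => sub_nonneg.2 (le_Fvec_of_isExceptional hn hl i.succ), ?_⟩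
  rw [qform_gramD_one_eq_dnForm, lD_partner]
  exact ((isNegSemidefWithRadical_dnForm hn).isExceptional_radical_sub hl).2

/-- in the `(Dₙ, C₁)` lattice: (i) `⟨l(a), l(a')⟩ ∈ {0,1}` for distinct
`a, a' ∈ I`; (ii) each `a ∈ I` has exactly one `a' ∈ I` with `⟨l(a), l(a')⟩ = 1`, and for
this `a'` one has `l(a) + l(a') = F`; (iii) `⟨F,F⟩ = 0`, `⟨F,Cᵢ⟩ = 0` for `1 ≤ i ≤ n`,
and `⟨F, l(a)⟩ = 0` for every `a ∈ I`. -/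
theorem stmt9 (n : ℕ) (hn : 4 ≤ n) :
    (∀ a ∈ ID n 1, ∀ a' ∈ ID n 1, a ≠ a' →
      qform (gramD n 1) (lD n a) (lD n a') ∈ ({0, 1} : Set ℤ))
    ∧ (∀ a ∈ ID n 1, ∃! a' : Fin n → ℤ,
        a' ∈ ID n 1 ∧ qform (gramD n 1) (lD n a) (lD n a') = 1)
    ∧ (∀ a ∈ ID n 1, ∀ a' ∈ ID n 1,
        qform (gramD n 1) (lD n a) (lD n a') = 1 → lD n a + lD n a' = Fvec n)
    ∧ qform (gramD n 1) (Fvec n) (Fvec n) = 0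
    ∧ (∀ i : Fin (n + 1), 1 ≤ (i : ℕ) →
        qform (gramD n 1) (Fvec n) (Pi.single i 1) = 0)
    ∧ ∀ a ∈ ID n 1, qform (gramD n 1) (Fvec n) (lD n a) = 0 := by
  have h := isNegSemidefWithRadical_dnForm (n := n) (by omega)
  have sum_eq : ∀ a ∈ ID n 1, ∀ a' ∈ ID n 1, dnForm n (lD n a) (lD n a') = 1 →
      lD n a + lD n a' = Fvec n := fun a ha a' ha' =>
    h.add_eq_of_pairing_eq_one (isExceptional_lD_of_mem_ID ha) (isExceptional_lD_of_mem_ID ha')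
  simp only [qform_gramD_one_eq_dnForm]
  refine ⟨fun a ha a' ha' hne => ?_, fun a ha => ?_, sum_eq, h.radical_apply _,
    fun _ _ => h.radical_apply _, fun _ _ => h.radical_apply _⟩
  · exact h.pairing_eq_zero_or_eq_one (isExceptional_lD_of_mem_ID ha)
      (isExceptional_lD_of_mem_ID ha') ((lD_injective n).ne hne)
  · refine ⟨partner n a, ⟨partner_mem_ID (by omega) ha, ?_⟩, fun b ⟨hb, hb1⟩ => ?_⟩
    · rw [lD_partner]
      exact h.apply_radical_sub (isExceptional_lD_of_mem_ID ha)
    · apply lD_injective n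
      rw [lD_partner, ← sum_eq a ha b hb hb1, add_sub_cancel_left]
end

section
/- In the (D_n, C_1) lattice, for each index i with 1 ≤ i ≤ n: exactly 2 elements a of I satisfy ⟨l(a), C_i⟩ = 1, exactly 2 satisfy ⟨l(a), C_i⟩ = −1, and exactly 2n − 4 satisfy ⟨l(a), C_i⟩ = 0. -/
/-!
The map `dnProj` sending `C₀ ↦ -e₀`, `Cᵢ ↦ e_{i-1} - eᵢ` (`1 ≤ i < n`) and
`Cₙ ↦ e_{n-2} + e_{n-1}` carries the form to the negated dot product of `ℤⁿ`:
`⟨x, y⟩ = -(dnProj x ⬝ᵥ dnProj y)`. Its kernel is spanned by the fibre class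
`2C₀ + ⋯ + 2C_{n-2} + C_{n-1} + Cₙ`, whose `C₀`-coefficient is `2`, so `a ↦ dnProj (l a)` is
injective. Hence `a ∈ I` exactly when `dnProj (l a) = ±eₜ`, and each of these `2n` vectors is
hit by a nonnegative `a` (`C₀ + ⋯ + Cₜ` for `-eₜ`, the fibre class minus it for `+eₜ`).
Finally `⟨l a, Cᵢ⟩ = -(±eₜ ⬝ᵥ αᵢ)` for a root `αᵢ = ±e_k ± e_l` of `Dₙ`, and such a root has
dot product `±1` with exactly two signed unit vectors each, and `0` with the other `2n - 4`.
-/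

-- `stdVec n k = 0` for `k ≥ n`.
def stdVec (n k : ℕ) : Fin n → ℤ := fun j => if (j : ℕ) = k then 1 else 0

lemma stdVec_dotProduct_stdVec (n a b : ℕ) :
    stdVec n a ⬝ᵥ stdVec n b = if a = b ∧ a < n then 1 else 0 := by
  simp only [dotProduct, stdVec, ite_zero_mul_ite_zero, mul_one]
  rw [Fin.sum_univ_eq_sum_range (fun j => if j = a ∧ j = b then (1 : ℤ) else 0)]
  split_ifs with h
  · obtain ⟨rfl, ha⟩ := h
    rw [Finset.sum_eq_single a] <;> simp_all
  · refine Finset.sum_eq_zero fun j hj => if_neg ?_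
    simp only [Finset.mem_range] at hj
    omega

def dnRoot (n p : ℕ) : Fin n → ℤ :=
  if p = 0 then -stdVec n 0
  else if p = n then stdVec n (n - 2) + stdVec n (n - 1)
  else stdVec n (p - 1) - stdVec n p

lemma gramD_eq_neg_dotProduct_dnRoot {n : ℕ} (hn : 2 ≤ n) (p q : Fin (n + 1)) :
    gramD n 1 p q = -(dnRoot n p ⬝ᵥ dnRoot n q) := by
  have hp := p.isLt
  have hq := q.isLt
  simp only [gramD, dnRoot, Fin.ext_iff]
  split_ifs <;>
    simp only [neg_dotProduct, dotProduct_neg, add_dotProduct, dotProduct_add, sub_dotProduct,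
      dotProduct_sub, stdVec_dotProduct_stdVec, true_and] <;>
    split_ifs <;> omega

-- The coordinates of `∑ p, x p • dnRoot n p`.
def dnProj (n : ℕ) : (Fin (n + 1) → ℤ) →ₗ[ℤ] (Fin n → ℤ) where
  toFun x j := x j.succ - x j.castSucc + if (j : ℕ) + 2 = n then x (Fin.last n) else 0
  map_add' x y := by ext j; simp only [Pi.add_apply]; split_ifs <;> ring
  map_smul' c x := by
    ext j
    simp only [Pi.smul_apply, smul_eq_mul, RingHom.id_apply]
    split_ifs <;> ring

lemma dnProj_apply (n : ℕ) (x : Fin (n + 1) → ℤ) (j : Fin n) :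
    dnProj n x j = x j.succ - x j.castSucc + if (j : ℕ) + 2 = n then x (Fin.last n) else 0 := rfl

lemma dnProj_single {n : ℕ} (hn : 2 ≤ n) (p : Fin (n + 1)) :
    dnProj n (Pi.single p 1) = dnRoot n p := by
  ext j
  have hp := p.isLt
  have hj := j.isLt
  unfold dnRoot
  split_ifs <;>
    simp only [dnProj_apply, stdVec, Pi.single_apply, Fin.ext_iff, Fin.val_succ,
      Fin.val_castSucc, Fin.val_last, Pi.neg_apply, Pi.add_apply, Pi.sub_apply] <;>
    split_ifs <;> omega

lemma qform_gramD_eq_neg_dotProduct {n : ℕ} (hn : 2 ≤ n) (x y : Fin (n + 1) → ℤ) :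
    qform (gramD n 1) x y = -(dnProj n x ⬝ᵥ dnProj n y) := by
  have hbasis : ∀ p : Fin (n + 1), (fun q => if p = q then (1 : ℤ) else 0) = Pi.single p 1 :=
    fun p => by ext q; simp [Pi.single_apply, eq_comm]
  rw [LinearMap.pi_apply_eq_sum_univ (dnProj n) x, LinearMap.pi_apply_eq_sum_univ (dnProj n) y]
  simp only [hbasis, dnProj_single hn, sum_dotProduct, dotProduct_sum, smul_dotProduct,
    dotProduct_smul, smul_eq_mul, qform, gramD_eq_neg_dotProduct_dnRoot hn,
    Finset.mul_sum, ← Finset.sum_neg_distrib]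
  rw [Finset.sum_comm]
  exact Finset.sum_congr rfl fun p _ => Finset.sum_congr rfl fun q _ => by ring

lemma dnProj_eq_zero {n : ℕ} (hn : 2 ≤ n) {z : Fin (n + 1) → ℤ} (hz : dnProj n z = 0)
    (h0 : z 0 = 0) : z = 0 := by
  set w : ℕ → ℤ := fun k => z ⟨min k n, by omega⟩ with hw
  have hzw : ∀ k (hk : k < n + 1), z ⟨k, hk⟩ = w k := fun k hk => by
    simp only [hw, min_eq_left (Nat.lt_succ_iff.mp hk)]
  have hrel : ∀ k < n, w (k + 1) - w k + (if k + 2 = n then w n else 0) = 0 := fun k hk => by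
    have := congrFun hz ⟨k, hk⟩
    simp only [dnProj_apply, Fin.succ_mk, Fin.castSucc_mk, Fin.last, hzw] at this
    exact this
  have hlow : ∀ k, k + 2 ≤ n → w k = 0 := by
    intro k
    induction k with
    | zero => intro _; rw [← hzw 0 (by omega)]; exact h0
    | succ k ih =>
      intro hk
      have := hrel k (by omega)
      rw [if_neg (by omega)] at this
      linarith [ih (by omega)]
  have hpen := hrel (n - 2) (by omega)
  have hlast := hrel (n - 1) (by omega)
  rw [if_pos (by omega), hlow (n - 2) (by omega), show n - 2 + 1 = n - 1 by omega] at hpen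
  rw [if_neg (by omega), show n - 1 + 1 = n by omega] at hlast
  funext ⟨k, hk⟩
  rw [hzw k hk, Pi.zero_apply]
  rcases (show k + 2 ≤ n ∨ k = n - 1 ∨ k = n by omega) with h | rfl | rfl
  · exact hlow k h
  · linarith
  · linarith

lemma dnProj_lD_injective {n : ℕ} (hn : 2 ≤ n) :
    Function.Injective (fun a => dnProj n (lD n a)) := by
  intro a b hab
  have hdiff := dnProj_eq_zero hn (z := lD n a - lD n b)
    (by rw [map_sub]; exact sub_eq_zero.mpr hab) (by simp [lD])
  exact Fin.cons_right_injective 1 (sub_eq_zero.mp hdiff)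

def chainClass (n t : ℕ) : Fin (n + 1) → ℤ := fun k => if (k : ℕ) ≤ t then 1 else 0

def fiberClass (n : ℕ) : Fin (n + 1) → ℤ := fun k => if (k : ℕ) + 2 ≤ n then 2 else 1

lemma dnProj_chainClass (n : ℕ) (t : Fin n) : dnProj n (chainClass n t) = Pi.single t (-1) := by
  ext j
  have := t.isLt
  simp only [dnProj_apply, chainClass, Pi.single_apply, Fin.ext_iff, Fin.val_succ,
    Fin.val_castSucc, Fin.val_last]
  split_ifs <;> omega

lemma dnProj_fiberClass (n : ℕ) : dnProj n (fiberClass n) = 0 := by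
  ext j
  have := j.isLt
  simp only [dnProj_apply, fiberClass, Fin.val_succ, Fin.val_castSucc, Fin.val_last,
    Pi.zero_apply]
  split_ifs <;> omega

def signedClass (n : ℕ) (t : Fin n) (u : ℤˣ) : Fin (n + 1) → ℤ :=
  if u = 1 then fiberClass n - chainClass n t else chainClass n t

lemma dnProj_signedClass (n : ℕ) (t : Fin n) (u : ℤˣ) :
    dnProj n (signedClass n t u) = Pi.single t (u : ℤ) := by
  rcases Int.units_eq_one_or u with rfl | rfl
  · simp [signedClass, dnProj_fiberClass, ← Pi.single_neg, dnProj_chainClass]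
  · simp [signedClass, dnProj_chainClass]

lemma signedClass_zero {n : ℕ} (hn : 2 ≤ n) (t : Fin n) (u : ℤˣ) : signedClass n t u 0 = 1 := by
  unfold signedClass chainClass fiberClass
  split_ifs <;> simp
  omega

lemma signedClass_nonneg (n : ℕ) (t : Fin n) (u : ℤˣ) (k : Fin (n + 1)) :
    0 ≤ signedClass n t u k := by
  unfold signedClass chainClass fiberClass
  split_ifs <;> simp <;> omega

lemma exists_eq_single_of_dotProduct_self_eq_one {ι : Type*} [Fintype ι] [DecidableEq ι]
    {w : ι → ℤ} (h : w ⬝ᵥ w = 1) : ∃ t, ∃ u : ℤˣ, w = Pi.single t (u : ℤ) := by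
  obtain ⟨t, ht⟩ : ∃ t, w t ≠ 0 := by
    by_contra! h'
    simp [dotProduct, h'] at h
  have hsplit := Finset.add_sum_erase Finset.univ (fun j => w j * w j) (Finset.mem_univ t)
  have hrest : 0 ≤ ∑ j ∈ Finset.univ.erase t, w j * w j :=
    Finset.sum_nonneg fun j _ => mul_self_nonneg (w j)
  have hpos : 0 < w t * w t := mul_self_pos.mpr ht
  rw [← dotProduct] at hsplit
  have hwt : w t * w t = 1 := by omega
  have hzero : ∑ j ∈ Finset.univ.erase t, w j * w j = 0 := by omega
  rw [Finset.sum_eq_zero_iff_of_nonneg fun j _ => mul_self_nonneg (w j)] at hzero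
  refine ⟨t, (IsUnit.of_mul_eq_one _ hwt).unit, funext fun j => ?_⟩
  rcases eq_or_ne j t with rfl | hj
  · simp
  · simpa [Pi.single_apply, hj] using hzero j (Finset.mem_erase.mpr ⟨hj, Finset.mem_univ j⟩)

lemma single_units_injective {ι : Type*} [DecidableEq ι] :
    Function.Injective (fun p : ι × ℤˣ => (Pi.single p.1 (p.2 : ℤ) : ι → ℤ)) := by
  rintro ⟨t, u⟩ ⟨t', u'⟩ h
  simp only at h
  obtain rfl : t = t' := by
    by_contra hne
    simpa [Pi.single_apply, hne] using congrFun h t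
  simpa [Units.ext_iff] using Pi.single_injective t h

def dnSolution (n : ℕ) (p : Fin n × ℤˣ) : Fin n → ℤ := Fin.tail (signedClass n p.1 p.2)

lemma lD_dnSolution {n : ℕ} (hn : 2 ≤ n) (p : Fin n × ℤˣ) :
    lD n (dnSolution n p) = signedClass n p.1 p.2 := by
  unfold lD dnSolution
  simpa [signedClass_zero hn] using Fin.cons_self_tail (signedClass n p.1 p.2)

lemma dnProj_lD_dnSolution {n : ℕ} (hn : 2 ≤ n) (p : Fin n × ℤˣ) :
    dnProj n (lD n (dnSolution n p)) = Pi.single p.1 (p.2 : ℤ) := by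
  rw [lD_dnSolution hn, dnProj_signedClass]

lemma dnSolution_injective {n : ℕ} (hn : 2 ≤ n) : Function.Injective (dnSolution n) := fun p q h =>
  single_units_injective <| by
    simpa only [dnProj_lD_dnSolution hn] using congrArg (fun a => dnProj n (lD n a)) h

lemma ID_eq_range_dnSolution {n : ℕ} (hn : 2 ≤ n) : ID n 1 = Set.range (dnSolution n) := by
  ext a
  constructor
  · rintro ⟨-, ha⟩
    rw [qform_gramD_eq_neg_dotProduct hn, neg_eq_iff_eq_neg, neg_neg] at ha
    obtain ⟨t, u, htu⟩ := exists_eq_single_of_dotProduct_self_eq_one ha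
    exact ⟨(t, u), dnProj_lD_injective hn <| (dnProj_lD_dnSolution hn (t, u)).trans htu.symm⟩
  · rintro ⟨⟨t, u⟩, rfl⟩
    refine ⟨fun k => signedClass_nonneg n t u k.succ, ?_⟩
    rw [qform_gramD_eq_neg_dotProduct hn, dnProj_lD_dnSolution hn, single_dotProduct,
      Pi.single_eq_same, ← Units.val_mul, Int.units_mul_self, Units.val_one]

lemma qform_lD_dnSolution_single {n : ℕ} (hn : 2 ≤ n) (p : Fin n × ℤˣ) (i : Fin (n + 1)) :
    qform (gramD n 1) (lD n (dnSolution n p)) (Pi.single i 1) = -((p.2 : ℤ) * dnRoot n i p.1) := by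
  rw [qform_gramD_eq_neg_dotProduct hn, dnProj_lD_dnSolution hn, dnProj_single hn,
    single_dotProduct]

lemma ncard_sep_ID {n : ℕ} (hn : 2 ≤ n) (P : (Fin n → ℤ) → Prop) :
    {a ∈ ID n 1 | P a}.ncard = {p | P (dnSolution n p)}.ncard := by
  have himage : {a ∈ ID n 1 | P a} = dnSolution n '' (dnSolution n ⁻¹' {a | P a}) := by
    rw [Set.image_preimage_eq_range_inter, ← ID_eq_range_dnSolution hn]
    rfl
  rw [himage, Set.ncard_image_of_injective _ (dnSolution_injective hn)]
  rfl

def IsTypeDRoot {ι : Type*} (r : ι → ℤ) : Prop :=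
  ∃ k l, k ≠ l ∧ IsUnit (r k) ∧ IsUnit (r l) ∧ ∀ t, t ≠ k → t ≠ l → r t = 0

namespace IsTypeDRoot

variable {ι : Type*} {r : ι → ℤ}

lemma ncard_units_mul_eq_of_isUnit (hr : IsTypeDRoot r) {w : ℤ} (hw : IsUnit w) :
    {p : ι × ℤˣ | (p.2 : ℤ) * r p.1 = w}.ncard = 2 := by
  obtain ⟨k, l, hkl, ⟨rk, hrk⟩, ⟨rl, hrl⟩, hr0⟩ := hr
  obtain ⟨w, rfl⟩ := hw
  have hsolve : ∀ s u : ℤˣ, u * s = w ↔ u = w * s := fun s u => by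
    constructor <;> rintro rfl <;> simp [mul_assoc, Int.units_mul_self]
  have hset : {p : ι × ℤˣ | (p.2 : ℤ) * r p.1 = w} = {(k, w * rk), (l, w * rl)} := by
    ext ⟨t, u⟩
    simp only [Set.mem_ofPred_eq, Set.mem_insert_iff, Set.mem_singleton_iff, Prod.mk.injEq]
    by_cases htk : t = k
    · subst htk
      simp [hkl, ← hrk, ← Units.val_mul, Units.ext_iff.symm, hsolve]
    by_cases htl : t = l
    · subst htl
      simp [htk, ← hrl, ← Units.val_mul, Units.ext_iff.symm, hsolve]
    simp [htk, htl, hr0 t htk htl, eq_comm (a := (0 : ℤ))]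
  rw [hset, Set.ncard_pair (by simp [hkl])]

lemma ncard_units_mul_eq_zero [Fintype ι] (hr : IsTypeDRoot r) :
    {p : ι × ℤˣ | (p.2 : ℤ) * r p.1 = 0}.ncard = 2 * (Fintype.card ι - 2) := by
  obtain ⟨k, l, hkl, hk, hl, hr0⟩ := hr
  have hset : {p : ι × ℤˣ | (p.2 : ℤ) * r p.1 = 0} = ({k, l}ᶜ : Set ι) ×ˢ Set.univ := by
    ext ⟨t, u⟩
    simp only [Set.mem_ofPred_eq, Set.mem_prod, Set.mem_compl_iff, Set.mem_insert_iff,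
      Set.mem_singleton_iff, Set.mem_univ, and_true, not_or, Units.mul_right_eq_zero]
    constructor
    · intro h
      refine ⟨?_, ?_⟩ <;> rintro rfl <;> simp_all [IsUnit.ne_zero]
    · exact fun ⟨htk, htl⟩ => hr0 t htk htl
  have hcompl := Set.ncard_add_ncard_compl ({k, l} : Set ι)
  rw [Set.ncard_pair hkl, Nat.card_eq_fintype_card] at hcompl
  rw [hset, Set.ncard_prod, Set.ncard_univ, Nat.card_eq_fintype_card, Fintype.card_units_int]
  omega

end IsTypeDRoot

lemma dnRoot_isTypeDRoot {n : ℕ} (hn : 2 ≤ n) (i : Fin (n + 1)) (hi : 1 ≤ (i : ℕ)) :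
    IsTypeDRoot (dnRoot n i) := by
  have := i.isLt
  by_cases hin : (i : ℕ) = n
  · have hroot : dnRoot n i = stdVec n (n - 2) + stdVec n (n - 1) := by
      rw [dnRoot, if_neg (by omega), if_pos hin]
    refine ⟨⟨n - 2, by omega⟩, ⟨n - 1, by omega⟩, by simp [Fin.ext_iff]; omega, ?_, ?_, ?_⟩
    all_goals simp only [hroot, stdVec, Pi.add_apply, Int.isUnit_iff, ne_eq, Fin.ext_iff]
    all_goals intros; split_ifs <;> omega
  · have hroot : dnRoot n i = stdVec n (i - 1) - stdVec n i := by
      rw [dnRoot, if_neg (by omega), if_neg hin]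
    refine ⟨⟨i - 1, by omega⟩, ⟨i, by omega⟩, by simp [Fin.ext_iff]; omega, ?_, ?_, ?_⟩
    all_goals simp only [hroot, stdVec, Pi.sub_apply, Int.isUnit_iff, ne_eq, Fin.ext_iff]
    all_goals intros; split_ifs <;> omega

/-- in the `(Dₙ, C₁)` lattice, for each index `i` with `1 ≤ i ≤ n`: exactly `2`
elements `a ∈ I` satisfy `⟨l(a), Cᵢ⟩ = 1`, exactly `2` satisfy `⟨l(a), Cᵢ⟩ = -1`, and
exactly `2n - 4` satisfy `⟨l(a), Cᵢ⟩ = 0`. -/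
theorem stmt10 (n : ℕ) (hn : 4 ≤ n) (i : Fin (n + 1)) (hi : 1 ≤ (i : ℕ)) :
    {a ∈ ID n 1 | qform (gramD n 1) (lD n a) (Pi.single i 1) = 1}.ncard = 2
    ∧ {a ∈ ID n 1 | qform (gramD n 1) (lD n a) (Pi.single i 1) = -1}.ncard = 2
    ∧ {a ∈ ID n 1 | qform (gramD n 1) (lD n a) (Pi.single i 1) = 0}.ncard = 2 * n - 4 := by
  have hn2 : 2 ≤ n := by omega
  have hcount : ∀ v : ℤ, {a ∈ ID n 1 | qform (gramD n 1) (lD n a) (Pi.single i 1) = v}.ncard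
      = {p : Fin n × ℤˣ | (p.2 : ℤ) * dnRoot n i p.1 = -v}.ncard := fun v => by
    simp only [ncard_sep_ID hn2, qform_lD_dnSolution_single hn2, neg_eq_iff_eq_neg]
  have hroot := dnRoot_isTypeDRoot hn2 i hi
  refine ⟨?_, ?_, ?_⟩
  · rw [hcount]
    exact hroot.ncard_units_mul_eq_of_isUnit (Int.isUnit_iff.mpr (Or.inr rfl))
  · rw [hcount, neg_neg]
    exact hroot.ncard_units_mul_eq_of_isUnit isUnit_one
  · rw [hcount, neg_zero, hroot.ncard_units_mul_eq_zero, Fintype.card_fin]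
    omega
end

section
/- In the (D_n, C_n) lattice, the set I = { a ∈ ℤ^n : a_i ≥ 0 for all i and ⟨l(a), l(a)⟩ = −1 } has cardinality 2^{n−1}. -/
/-!
Send `Cᵢ ↦ αᵢ`, where `α₁, …, αₙ` are the simple roots of `Dₙ` in `ℤⁿ`: this is an
anti-isometry of `span(C₁, …, Cₙ)` onto the root lattice, and `⟨C₀, Cᵢ⟩ = δᵢₙ`. Since the
coordinates of `αₙ` sum to `2` and those of every other simple root to `0`, the vector
`x = ∑ aᵢ αᵢ` has coordinate sum `2aₙ`, so
`⟨l(a), l(a)⟩ = -1 + 2aₙ - |x|² = -1 - ∑ₖ xₖ (xₖ - 1)`.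
Thus `a ∈ I` exactly when `x ∈ {0,1}ⁿ`, and `a ↦ x` maps `I` bijectively onto the
`0/1`-vectors with even coordinate sum: these lie in the root lattice, and their coordinates
`aⱼ = ⟨x, ωⱼ⟩` against the fundamental weights are nonnegative. There are `2ⁿ⁻¹` of them.
-/

open Matrix

theorem Matrix.mul_eq_smul_one_comm {n R : Type*} [Fintype n] [DecidableEq n] [CommRing R]
    [IsDomain R] {A B : Matrix n n R} {c : R} (hc : c ≠ 0) (h : A * B = c • 1) :
    B * A = c • 1 := by
  have hdet : A.det ≠ 0 := by
    intro h0
    have := congrArg det h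
    rw [det_mul, h0, zero_mul, det_smul, det_one, mul_one] at this
    exact pow_ne_zero _ hc this.symm
  apply smul_right_injective (Matrix n n R) hdet
  calc A.det • (B * A) = adjugate A * (A * B) * A := by
        rw [← Matrix.mul_assoc, adjugate_mul, smul_mul, smul_mul, Matrix.one_mul]
    _ = A.det • (c • 1) := by
        rw [h, Matrix.mul_smul, Matrix.mul_one, smul_mul, adjugate_mul, smul_comm]

theorem Matrix.vecMul_dotProduct_vecMul {ι κ R : Type*} [Fintype ι] [Fintype κ]
    [CommSemiring R] (a b : ι → R) (M : Matrix ι κ R) :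
    (a ᵥ* M) ⬝ᵥ (b ᵥ* M) = ∑ i, ∑ j, a i * (M i ⬝ᵥ M j) * b j := by
  simp only [vecMul_eq_sum, sum_dotProduct, dotProduct_sum, smul_dotProduct, dotProduct_smul,
    smul_eq_mul, Finset.mul_sum]
  rw [Finset.sum_comm]
  exact Finset.sum_congr rfl fun i _ => Finset.sum_congr rfl fun j _ => by ring

theorem Int.sum_mul_sub_one_eq_zero_iff {ι : Type*} (s : Finset ι) (x : ι → ℤ) :
    ∑ k ∈ s, x k * (x k - 1) = 0 ↔ ∀ k ∈ s, x k = 0 ∨ x k = 1 := by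
  have hnonneg (t : ℤ) : 0 ≤ t * (t - 1) := by
    rcases le_or_gt t 0 with h | h
    · exact mul_nonneg_of_nonpos_of_nonpos h (by omega)
    · exact mul_nonneg h.le (by omega)
  rw [Finset.sum_eq_zero_iff_of_nonneg fun k _ => hnonneg (x k)]
  refine forall₂_congr fun k _ => ?_
  rw [mul_eq_zero, sub_eq_zero]

def evenBinaryVectors (n : ℕ) : Set (Fin n → ℤ) :=
  {x | (∀ k, x k = 0 ∨ x k = 1) ∧ Even (∑ k, x k)}

-- The last coordinate of an even binary vector is the parity of the others.
theorem ncard_evenBinaryVectors (n : ℕ) : (evenBinaryVectors (n + 1)).ncard = 2 ^ n := by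
  have hbinary : {y : Fin n → ℤ | ∀ k, y k = 0 ∨ y k = 1}.ncard = 2 ^ n := by
    have : {y : Fin n → ℤ | ∀ k, y k = 0 ∨ y k = 1}
        = ↑(Fintype.piFinset fun _ : Fin n => ({0, 1} : Finset ℤ)) := by
      ext y; simp
    rw [this, Set.ncard_coe_finset, Fintype.card_piFinset]
    simp
  rw [← hbinary]
  refine Set.ncard_congr (fun x _ => Fin.init x) (fun x hx k => hx.1 k.castSucc) ?_ ?_
  · rintro x x' ⟨hx, he⟩ ⟨hx', he'⟩ h
    have hinit (i : Fin n) : x i.castSucc = x' i.castSucc := congrFun h i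
    have hlast : x (Fin.last n) = x' (Fin.last n) := by
      rw [Fin.sum_univ_castSucc, Finset.sum_congr rfl fun i _ => hinit i] at he
      rw [Fin.sum_univ_castSucc] at he'
      obtain ⟨r, hr⟩ := he
      obtain ⟨s, hs⟩ := he'
      rcases hx (Fin.last n) with h1 | h1 <;> rcases hx' (Fin.last n) with h2 | h2 <;> omega
    funext k
    induction k using Fin.lastCases
    exacts [hlast, hinit _]
  · intro y hy
    refine ⟨Fin.snoc y (if Even (∑ k, y k) then 0 else 1), ⟨fun k => ?_, ?_⟩, Fin.init_snoc _ _⟩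
    · induction k using Fin.lastCases
      · simp only [Fin.snoc_last]; split_ifs <;> simp
      · simpa using hy _
    · rw [Fin.sum_univ_castSucc]
      simp only [Fin.snoc_castSucc, Fin.snoc_last]
      split_ifs with h
      · simpa using h
      · rw [Int.not_even_iff_odd] at h; exact h.add_one

namespace DLattice

variable {m : ℕ}

/-- Row `i` is the simple root `αᵢ` of `D_{m+2}` in the standard basis `ε` of `ℤ^{m+2}`:
`αᵢ = εᵢ - εᵢ₊₁` for `i ≤ m` and `α_{m+1} = ε_m + ε_{m+1}`. It is the image of the
basis vector `Cᵢ₊₁` of the lattice. -/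
def rootMatrix (m : ℕ) : Matrix (Fin (m + 2)) (Fin (m + 2)) ℤ :=
  Matrix.of <| Fin.lastCases (Pi.single (Fin.last m).castSucc 1 + Pi.single (Fin.last (m + 1)) 1)
    fun i => Pi.single i.castSucc 1 - Pi.single i.succ 1

lemma rootMatrix_last :
    rootMatrix m (Fin.last (m + 1))
      = Pi.single (Fin.last m).castSucc 1 + Pi.single (Fin.last (m + 1)) 1 := by
  ext; simp [rootMatrix]

lemma rootMatrix_castSucc (i : Fin (m + 1)) :
    rootMatrix m i.castSucc = Pi.single i.castSucc 1 - Pi.single i.succ 1 := by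
  ext; simp [rootMatrix]

lemma rootMatrix_dotProduct_rootMatrix (i j : Fin (m + 2)) :
    rootMatrix m i ⬝ᵥ rootMatrix m j = -gramD (m + 2) (m + 2) i.succ j.succ := by
  unfold gramD
  induction i using Fin.lastCases <;> induction j using Fin.lastCases <;>
    simp only [rootMatrix_last, rootMatrix_castSucc, dotProduct_add, dotProduct_sub,
      dotProduct_single, mul_one] <;>
    simp only [Pi.add_apply, Pi.sub_apply, Pi.single_apply, Fin.ext_iff, Fin.val_succ,
      Fin.val_last, Fin.val_castSucc] <;>
    split_ifs <;> grind

lemma gramD_zero_zero (n k : ℕ) : gramD n k 0 0 = -1 := by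
  simp [gramD]

lemma gramD_zero_succ (j : Fin (m + 2)) :
    gramD (m + 2) (m + 2) 0 j.succ = if j = Fin.last (m + 1) then 1 else 0 := by
  simp only [gramD, Fin.ext_iff]; split_ifs <;> grind

lemma gramD_succ_zero (j : Fin (m + 2)) :
    gramD (m + 2) (m + 2) j.succ 0 = if j = Fin.last (m + 1) then 1 else 0 := by
  simp only [gramD, Fin.ext_iff]; split_ifs <;> grind

lemma qform_lD (a : Fin (m + 2) → ℤ) :
    qform (gramD (m + 2) (m + 2)) (lD (m + 2) a) (lD (m + 2) a)
      = -1 + 2 * a (Fin.last (m + 1)) - (a ᵥ* rootMatrix m) ⬝ᵥ (a ᵥ* rootMatrix m) := by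
  rw [vecMul_dotProduct_vecMul]
  simp only [qform, lD, Fin.sum_univ_succ (n := m + 2), Fin.cons_zero, Fin.cons_succ,
    gramD_zero_succ, gramD_succ_zero, rootMatrix_dotProduct_rootMatrix]
  simp only [gramD_zero_zero, one_mul, mul_one, ite_mul, mul_ite, zero_mul, mul_zero,
    Finset.sum_ite_eq', Finset.mem_univ, if_true, Finset.sum_add_distrib, mul_neg, neg_mul,
    Finset.sum_neg_distrib]
  ring

/-- Row `j` is `2ωⱼ`, twice the fundamental weight dual to `αⱼ`: `2(ε₀ + ⋯ + εⱼ)` for `j < m`,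
`ε₀ + ⋯ + ε_m - ε_{m+1}` for `j = m`, and `ε₀ + ⋯ + ε_{m+1}` for `j = m + 1`. -/
def coweightMatrix (m : ℕ) : Matrix (Fin (m + 2)) (Fin (m + 2)) ℤ :=
  Matrix.of fun j k => if (j : ℕ) < m then (if k ≤ j then 2 else 0)
    else if (j : ℕ) = m ∧ k = Fin.last (m + 1) then -1 else 1

lemma coweightMatrix_last : coweightMatrix m (Fin.last (m + 1)) = 1 := by
  ext k; simp [coweightMatrix]

lemma rootMatrix_mul_transpose_coweightMatrix :
    rootMatrix m * (coweightMatrix m)ᵀ = (2 : ℤ) • 1 := by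
  ext i j
  rw [mul_apply', Matrix.smul_apply, one_apply]
  induction i using Fin.lastCases <;>
    simp only [rootMatrix_last, rootMatrix_castSucc, add_dotProduct, sub_dotProduct,
      single_dotProduct, one_mul] <;>
    simp only [coweightMatrix, transpose_apply, of_apply, Fin.ext_iff, Fin.le_iff_val_le_val,
      Fin.val_succ, Fin.val_last, Fin.val_castSucc] <;>
    split_ifs <;> grind

lemma transpose_coweightMatrix_mul_rootMatrix :
    (coweightMatrix m)ᵀ * rootMatrix m = (2 : ℤ) • 1 :=
  Matrix.mul_eq_smul_one_comm two_ne_zero rootMatrix_mul_transpose_coweightMatrix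

lemma vecMul_rootMatrix_dotProduct_coweightMatrix (a : Fin (m + 2) → ℤ) (j : Fin (m + 2)) :
    (a ᵥ* rootMatrix m) ⬝ᵥ coweightMatrix m j = 2 * a j := by
  calc (a ᵥ* rootMatrix m) ⬝ᵥ coweightMatrix m j
      = (a ᵥ* rootMatrix m ᵥ* (coweightMatrix m)ᵀ) j := by
        rw [vecMul_transpose, mulVec, dotProduct_comm]
    _ = 2 * a j := by
        rw [vecMul_vecMul, rootMatrix_mul_transpose_coweightMatrix, vecMul_smul, vecMul_one]
        rfl

lemma vecMul_rootMatrix_injective : Function.Injective (· ᵥ* rootMatrix m) := by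
  intro a b h
  funext j
  have := vecMul_rootMatrix_dotProduct_coweightMatrix a j
  rw [show a ᵥ* rootMatrix m = b ᵥ* rootMatrix m from h,
    vecMul_rootMatrix_dotProduct_coweightMatrix] at this
  omega

lemma exists_vecMul_rootMatrix_eq (x : Fin (m + 2) → ℤ)
    (hx : ∀ j, Even (x ⬝ᵥ coweightMatrix m j)) :
    ∃ a, a ᵥ* rootMatrix m = x ∧ ∀ j, x ⬝ᵥ coweightMatrix m j = 2 * a j := by
  choose a ha using hx
  refine ⟨a, smul_right_injective _ two_ne_zero ?_, fun j => by rw [ha]; ring⟩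
  have h2a : (2 : ℤ) • a = x ᵥ* (coweightMatrix m)ᵀ := by
    funext j; simp [vecMul_transpose, mulVec, dotProduct_comm, ha, two_mul]
  show (2 : ℤ) • (a ᵥ* rootMatrix m) = (2 : ℤ) • x
  rw [← smul_vecMul, h2a, vecMul_vecMul, transpose_coweightMatrix_mul_rootMatrix, vecMul_smul,
    vecMul_one]

lemma qform_lD_eq (a : Fin (m + 2) → ℤ) :
    qform (gramD (m + 2) (m + 2)) (lD (m + 2) a) (lD (m + 2) a)
      = -1 - ∑ k, (a ᵥ* rootMatrix m) k * ((a ᵥ* rootMatrix m) k - 1) := by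
  rw [qform_lD, ← vecMul_rootMatrix_dotProduct_coweightMatrix a (Fin.last _), coweightMatrix_last,
    dotProduct_one, dotProduct]
  simp only [mul_sub, mul_one, Finset.sum_sub_distrib]
  ring

lemma mem_ID_iff (a : Fin (m + 2) → ℤ) :
    a ∈ ID (m + 2) (m + 2) ↔
      (∀ i, 0 ≤ a i) ∧ ∀ k, (a ᵥ* rootMatrix m) k = 0 ∨ (a ᵥ* rootMatrix m) k = 1 := by
  simp only [ID, Set.mem_ofPred_eq, qform_lD_eq, sub_eq_self,
    Int.sum_mul_sub_one_eq_zero_iff, Finset.mem_univ, true_imp_iff]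

lemma dotProduct_coweightMatrix_nonneg_even {x : Fin (m + 2) → ℤ}
    (hx : x ∈ evenBinaryVectors (m + 2)) (j : Fin (m + 2)) :
    0 ≤ x ⬝ᵥ coweightMatrix m j ∧ Even (x ⬝ᵥ coweightMatrix m j) := by
  obtain ⟨hbin, heven⟩ := hx
  have hx0 (k : Fin (m + 2)) : 0 ≤ x k := by rcases hbin k with h | h <;> omega
  by_cases hj : (j : ℕ) < m
  · have hdot : x ⬝ᵥ coweightMatrix m j = 2 * ∑ k, if k ≤ j then x k else 0 := by
      simp only [dotProduct, coweightMatrix, of_apply, if_pos hj, Finset.mul_sum]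
      exact Finset.sum_congr rfl fun k _ => by split_ifs <;> ring
    rw [hdot]
    exact ⟨mul_nonneg zero_le_two (Finset.sum_nonneg fun k _ => by split_ifs <;> simp [hx0]),
      even_two_mul _⟩
  by_cases hjm : (j : ℕ) = m
  · have hdot : x ⬝ᵥ coweightMatrix m j = ∑ k, x k - 2 * x (Fin.last (m + 1)) := by
      simp only [dotProduct, coweightMatrix, of_apply, hjm, lt_irrefl, if_false, true_and]
      rw [← Fintype.sum_ite_eq' (Fin.last (m + 1)) fun k => 2 * x k, ← Finset.sum_sub_distrib]
      exact Finset.sum_congr rfl fun k _ => by split_ifs <;> ring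
    have hlast := Finset.single_le_sum (fun k _ => hx0 k) (Finset.mem_univ (Fin.last (m + 1)))
    have hle := hbin (Fin.last (m + 1))
    obtain ⟨r, hr⟩ := heven
    rw [hdot]
    -- an even integer that is at least `-1` is nonnegative
    exact ⟨by omega, r - x (Fin.last (m + 1)), by omega⟩
  · have hdot : x ⬝ᵥ coweightMatrix m j = ∑ k, x k := by
      simp [dotProduct, coweightMatrix, hj, hjm]
    exact hdot ▸ ⟨Finset.sum_nonneg fun k _ => hx0 k, heven⟩

lemma image_vecMul_rootMatrix_ID :
    (· ᵥ* rootMatrix m) '' ID (m + 2) (m + 2) = evenBinaryVectors (m + 2) := by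
  ext x
  constructor
  · rintro ⟨a, ha, rfl⟩
    refine ⟨((mem_ID_iff a).1 ha).2, a (Fin.last (m + 1)), ?_⟩
    rw [← dotProduct_one, ← coweightMatrix_last, vecMul_rootMatrix_dotProduct_coweightMatrix,
      two_mul]
  · intro hx
    obtain ⟨a, rfl, ha⟩ := exists_vecMul_rootMatrix_eq x fun j =>
      (dotProduct_coweightMatrix_nonneg_even hx j).2
    refine ⟨a, (mem_ID_iff a).2 ⟨fun j => ?_, hx.1⟩, rfl⟩
    have := (dotProduct_coweightMatrix_nonneg_even hx j).1
    rw [ha] at this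
    omega

end DLattice

/-- Lemma 3.7 for the spinor representation: in the `(Dₙ, Cₙ)` lattice, the
set `I` has cardinality `2^(n-1)`, the dimension of the half-spinor representation `S⁺`. -/
theorem stmt11 (n : ℕ) (hn : 4 ≤ n) :
    (ID n n).ncard = 2 ^ (n - 1) := by
  obtain ⟨m, rfl⟩ : ∃ m, n = m + 2 := ⟨n - 2, by omega⟩
  rw [← Set.ncard_image_of_injective _ DLattice.vecMul_rootMatrix_injective,
    DLattice.image_vecMul_rootMatrix_ID, ncard_evenBinaryVectors]
  rfl
end

section
/- In the E_6 lattice with marking, the set I = { a ∈ ℤ^6 : a_i ≥ 0 for all i and ⟨l(a), l(a)⟩ = −1 } has cardinality 27. -/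
/-- The Gram matrix of the marked `E₆` lattice: basis `C₀, C₁, …, C₆` (index `i : Fin 7`
corresponds to `Cᵢ`), with `⟨C₀,C₀⟩ = -1`, `⟨Cᵢ,Cᵢ⟩ = -2` for `1 ≤ i ≤ 6`,
`⟨Cᵢ,Cᵢ₊₁⟩ = 1` for `1 ≤ i ≤ 4`, `⟨C₃,C₆⟩ = 1`, `⟨C₀,C₁⟩ = 1`, and all other
off-diagonal entries `0`. -/
def gramE6 (i j : Fin 7) : ℤ :=
  if i = j then (if (i : ℕ) = 0 then -1 else -2)
  else if (1 ≤ (i : ℕ) ∧ (j : ℕ) = (i : ℕ) + 1 ∧ (j : ℕ) ≤ 5)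
      ∨ (1 ≤ (j : ℕ) ∧ (i : ℕ) = (j : ℕ) + 1 ∧ (i : ℕ) ≤ 5)
      ∨ ((i : ℕ) = 3 ∧ (j : ℕ) = 6) ∨ ((j : ℕ) = 3 ∧ (i : ℕ) = 6)
      ∨ ((i : ℕ) = 0 ∧ (j : ℕ) = 1) ∨ ((j : ℕ) = 0 ∧ (i : ℕ) = 1) then 1
  else 0

/-- The class `l(a) = C₀ + ∑_{i=1}^6 aᵢ Cᵢ`, as a coordinate vector. -/
def lE6 (a : Fin 6 → ℤ) : Fin 7 → ℤ := Fin.cons 1 a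

/-- The set `I` of coefficient tuples `a ∈ ℤ⁶` with all `aᵢ ≥ 0` and `⟨l(a), l(a)⟩ = -1`. -/
def IE6 : Set (Fin 6 → ℤ) :=
  {a | (∀ i, 0 ≤ a i) ∧ qform gramE6 (lE6 a) (lE6 a) = -1}

/-! The sublattice spanned by `C₁, …, C₆` carries minus the `E₆` Cartan form, so
`⟨l(a), l(a)⟩ = -1 - 2 (q(a) - a₁)` with `q(a) = ½ aᵀ C a` positive definite. The equation
`q(a) = a₁` describes an ellipsoid, whose integral points satisfy `a ≤ (2, 3, 4, 3, 2, 2)`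
(the `nlinarith` hints are squares from an LDLᵀ-type factorisation of `q`). Together with
`a ≥ 0` this leaves a finite box, in which a search finds exactly 27 solutions. -/

/-- `½ aᵀ C a` for the `E₆` Cartan matrix `C`, with the Dynkin diagram numbered as `C₁, …, C₆`. -/
def halfNormE6 (a : Fin 6 → ℤ) : ℤ :=
  a 0 ^ 2 + a 1 ^ 2 + a 2 ^ 2 + a 3 ^ 2 + a 4 ^ 2 + a 5 ^ 2
    - (a 0 * a 1 + a 1 * a 2 + a 2 * a 3 + a 3 * a 4 + a 2 * a 5)

lemma qform_lE6_self (a : Fin 6 → ℤ) :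
    qform gramE6 (lE6 a) (lE6 a) = -1 - 2 * (halfNormE6 a - a 0) := by
  simp only [qform, Fin.sum_univ_succ, Fin.sum_univ_zero, lE6, Fin.cons_zero, Fin.cons_succ]
  norm_num [gramE6, Fin.ext_iff, Fin.val_succ, halfNormE6]
  simp only [show (Fin.succ 2 : Fin 6) = 3 from rfl, show ((Fin.succ 2).succ : Fin 6) = 4 from rfl,
    show ((Fin.succ 2).succ.succ : Fin 6) = 5 from rfl]
  ring

lemma le_of_halfNormE6_eq {a : Fin 6 → ℤ} (h : halfNormE6 a = a 0) :
    a ≤ ![2, 3, 4, 3, 2, 2] := by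
  unfold halfNormE6 at h
  have ha0 : a 0 ≤ 2 := by
    nlinarith [sq_nonneg (5*a 0-4*a 1), sq_nonneg (6*a 1-5*a 2), sq_nonneg (7*a 2-6*a 3-6*a 5),
      sq_nonneg (8*a 3-7*a 4-6*a 5), sq_nonneg (3*a 4-2*a 5)]
  intro i
  fin_cases i
  · exact ha0
  · show a 1 ≤ 3
    nlinarith [sq_nonneg (2*a 0-a 1), sq_nonneg (6*a 1-5*a 2), sq_nonneg (7*a 2-6*a 3-6*a 5),
      sq_nonneg (8*a 3-7*a 4-6*a 5), sq_nonneg (3*a 4-2*a 5)]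
  · show a 2 ≤ 4
    nlinarith [sq_nonneg (2*a 0-a 1), sq_nonneg (3*a 1-2*a 2), sq_nonneg (7*a 2-6*a 3-6*a 5),
      sq_nonneg (8*a 3-7*a 4-6*a 5), sq_nonneg (3*a 4-2*a 5)]
  · show a 3 ≤ 3
    nlinarith [sq_nonneg (2*a 0-a 1), sq_nonneg (3*a 1-2*a 2), sq_nonneg (4*a 2-3*a 3-3*a 5),
      sq_nonneg (19*a 3-20*a 4-15*a 5), sq_nonneg (6*a 4-5*a 5)]
  · show a 4 ≤ 2
    nlinarith [sq_nonneg (2*a 0-a 1), sq_nonneg (3*a 1-2*a 2), sq_nonneg (4*a 2-3*a 3-3*a 5),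
      sq_nonneg (5*a 3-4*a 4-3*a 5), sq_nonneg (3*a 4-4*a 5)]
  · show a 5 ≤ 2
    nlinarith [sq_nonneg (2*a 0-a 1), sq_nonneg (3*a 1-2*a 2), sq_nonneg (4*a 2-3*a 3-3*a 5),
      sq_nonneg (5*a 3-4*a 4-3*a 5), sq_nonneg (2*a 4-a 5)]

lemma IE6_eq_filter :
    IE6 = ↑((Finset.Icc 0 ![2, 3, 4, 3, 2, 2]).filter fun a => halfNormE6 a = a 0) := by
  ext a
  simp only [IE6, qform_lE6_self, Finset.coe_filter, Finset.mem_Icc, Set.mem_ofPred_eq]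
  constructor
  · rintro ⟨hnonneg, hq⟩
    have h : halfNormE6 a = a 0 := by linarith
    exact ⟨⟨fun i => hnonneg i, le_of_halfNormE6_eq h⟩, h⟩
  · rintro ⟨⟨hnonneg, -⟩, h⟩
    exact ⟨fun i => hnonneg i, by rw [h]; ring⟩

set_option maxHeartbeats 4000000 in
set_option maxRecDepth 100000 in
lemma card_filter_halfNormE6_eq :
    ((Finset.Icc 0 ![2, 3, 4, 3, 2, 2]).filter fun a => halfNormE6 a = a 0).card = 27 := by
  decide

/-- Lemma 3.7 for type `E₆`: in the marked `E₆` lattice, the set `I` has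
cardinality `27`, the dimension of the standard representation of `E₆`. -/
theorem stmt13 : IE6.ncard = 27 := by
  rw [IE6_eq_filter, Set.ncard_coe_finset, card_filter_halfNormE6_eq]
end

section
/- In the E_6 lattice with marking, with K' := 3C_0 + 4C_1 + 5C_2 + 6C_3 + 4C_4 + 2C_5 + 3C_6: (i) for distinct a, a' ∈ I, ⟨l(a), l(a')⟩ ∈ {0, 1}; (ii) for each a ∈ I, exactly 10 elements a' ∈ I satisfy ⟨l(a), l(a')⟩ = 1 and exactly 16 elements a' ∈ I with a' ≠ a satisfy ⟨l(a), l(a')⟩ = 0; (iii) if a, a', a'' ∈ I satisfy l(a) + l(a') + l(a'') = K', then a, a', a'' are pairwise distinct and pairwise ⟨l(·), l(·)⟩ = 1; (iv) for each a ∈ I, the number of unordered pairs {a', a''} ⊆ I with l(a) + l(a') + l(a'') = K' is exactly 5. -/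
/-- `K' = 3C₀ + 4C₁ + 5C₂ + 6C₃ + 4C₄ + 2C₅ + 3C₆`, as a coordinate vector. -/
def KE6 : Fin 7 → ℤ := ![3, 4, 5, 6, 4, 2, 3]

/-! Let `A` be the Cartan matrix of `E₆` on `C₁, …, C₆`, so that
`⟨l(a), l(b)⟩ = a₁ + b₁ - 1 - aᵀAb`, and `a ∈ I` means `aᵀAa = 2a₁` with `a ≥ 0`. As `A` is
positive definite, Cauchy–Schwarz for it gives `aᵢ² ≤ (A⁻¹)ᵢᵢ · aᵀAa`, which first bounds `a₁`
and then every coordinate. This confines `I` to a box of 2160 points, on which `I` (the 27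
lines of the cubic surface) and each of the four claims are finite computations checked by the
kernel. -/

/-- `aᵀAb` for the Cartan matrix `A` of `E₆`; the Gram form on `C₁, …, C₆` is `-A`. -/
def cartanE6 (a b : Fin 6 → ℤ) : ℤ :=
  2 * (a 0 * b 0 + a 1 * b 1 + a 2 * b 2 + a 3 * b 3 + a 4 * b 4 + a 5 * b 5)
  - (a 0 * b 1 + a 1 * b 0) - (a 1 * b 2 + a 2 * b 1) - (a 2 * b 3 + a 3 * b 2)
  - (a 3 * b 4 + a 4 * b 3) - (a 2 * b 5 + a 5 * b 2)

def pairingE6 (a b : Fin 6 → ℤ) : ℤ := a 0 + b 0 - 1 - cartanE6 a b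

theorem qform_lE6 (a b : Fin 6 → ℤ) : qform gramE6 (lE6 a) (lE6 b) = pairingE6 a b := by
  simp [qform, Fin.sum_univ_succ, lE6, gramE6, pairingE6, cartanE6]
  ring

/- The constants are the diagonal `4/3, 10/3, 6, 10/3, 4/3, 2` of `A⁻¹`; each certificate
completes the squares of the positive semidefinite form `(A⁻¹)ᵢᵢ A - eᵢeᵢᵀ`. -/
theorem sq_le_cartanE6 (a : Fin 6 → ℤ) :
    3 * a 0 ^ 2 ≤ 4 * cartanE6 a a ∧ 3 * a 1 ^ 2 ≤ 10 * cartanE6 a a ∧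
    a 2 ^ 2 ≤ 6 * cartanE6 a a ∧ 3 * a 3 ^ 2 ≤ 10 * cartanE6 a a ∧
    3 * a 4 ^ 2 ≤ 4 * cartanE6 a a ∧ a 5 ^ 2 ≤ 2 * cartanE6 a a := by
  unfold cartanE6
  refine ⟨?_, ?_, ?_, ?_, ?_, ?_⟩
  · linarith [sq_nonneg (2 * a 1 - a 0 - a 2), sq_nonneg (3 * a 2 - a 0 - 2 * a 3 - 2 * a 5),
      sq_nonneg (4 * a 3 - a 0 - 3 * a 4 - 2 * a 5), sq_nonneg (5 * a 4 - a 0 - 2 * a 5),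
      sq_nonneg (4 * a 5 - 3 * a 0)]
  · linarith [sq_nonneg (2 * a 0 - a 1), sq_nonneg (2 * a 2 - a 1 - a 3 - a 5),
      sq_nonneg (3 * a 3 - a 1 - 2 * a 4 - a 5), sq_nonneg (4 * a 4 - a 1 - a 5),
      sq_nonneg (5 * a 5 - 3 * a 1)]
  · linarith [sq_nonneg (2 * a 0 - a 1), sq_nonneg (3 * a 1 - 2 * a 2),
      sq_nonneg (2 * a 3 - a 2 - a 4), sq_nonneg (3 * a 4 - a 2), sq_nonneg (2 * a 5 - a 2)]
  · linarith [sq_nonneg (2 * a 0 - a 1), sq_nonneg (3 * a 1 - 2 * a 2),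
      sq_nonneg (4 * a 2 - 3 * a 3 - 3 * a 5), sq_nonneg (2 * a 4 - a 3),
      sq_nonneg (5 * a 5 - 3 * a 3)]
  · linarith [sq_nonneg (2 * a 0 - a 1), sq_nonneg (3 * a 1 - 2 * a 2),
      sq_nonneg (4 * a 2 - 3 * a 3 - 3 * a 5), sq_nonneg (5 * a 3 - 4 * a 4 - 3 * a 5),
      sq_nonneg (4 * a 5 - 3 * a 4)]
  · linarith [sq_nonneg (2 * a 0 - a 1), sq_nonneg (3 * a 1 - 2 * a 2),
      sq_nonneg (4 * a 2 - 3 * a 3 - 3 * a 5), sq_nonneg (5 * a 3 - 4 * a 4 - 3 * a 5),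
      sq_nonneg (2 * a 4 - a 5)]

theorem le_of_pairingE6_self_eq {a : Fin 6 → ℤ} (ha : pairingE6 a a = -1) :
    a ≤ ![2, 3, 4, 3, 2, 2] := by
  have hcartan : cartanE6 a a = 2 * a 0 := by rw [pairingE6] at ha; linarith
  obtain ⟨h0, h1, h2, h3, h4, h5⟩ := sq_le_cartanE6 a
  rw [hcartan] at h0 h1 h2 h3 h4 h5
  have ha0 : a 0 ≤ 2 := by nlinarith
  intro i
  fin_cases i <;> simp only [Fin.isValue, Fin.reduceFinMk, Fin.zero_eta, Fin.mk_one,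
    Matrix.cons_val] <;> nlinarith

/- `noncomputable` only because elaboration finds the order on `ℤ` through the noncomputable
`Int.instConditionallyCompleteLinearOrder`; the kernel still evaluates it. -/
noncomputable def linesE6 : Finset (Fin 6 → ℤ) :=
  (Finset.Icc 0 ![2, 3, 4, 3, 2, 2]).filter fun a => pairingE6 a a = -1

theorem IE6_eq_linesE6 : IE6 = linesE6 := by
  ext a
  simp only [IE6, linesE6, qform_lE6, Finset.coe_filter, Finset.mem_Icc, Set.mem_ofPred_eq]
  exact ⟨fun ⟨hnonneg, ha⟩ => ⟨⟨hnonneg, le_of_pairingE6_self_eq ha⟩, ha⟩,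
    fun ⟨⟨hnonneg, _⟩, ha⟩ => ⟨hnonneg, ha⟩⟩

theorem lE6_add_add_eq_KE6_iff (a b c : Fin 6 → ℤ) :
    lE6 a + lE6 b + lE6 c = KE6 ↔ a + b + c = Fin.tail KE6 := by
  have hsum : lE6 a + lE6 b + lE6 c = Fin.cons 3 (a + b + c) := by
    ext i
    cases i using Fin.cases <;> simp [lE6]
  rw [hsum, ← Fin.cons_self_tail KE6, Fin.cons_inj]
  simp [KE6]

theorem ncard_setOf_eq_pair_eq_card_image {α : Type*} [DecidableEq α] (s : Finset α)
    (p : α → α → Prop) [DecidableRel p] :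
    {t : Finset α | ∃ x ∈ s, ∃ y ∈ s, t = {x, y} ∧ p x y}.ncard =
      (((s ×ˢ s).filter fun z => p z.1 z.2).image fun z => ({z.1, z.2} : Finset α)).card := by
  rw [← Set.ncard_coe_finset]
  congr 1
  ext t
  simp only [Finset.coe_image, Finset.coe_filter, Finset.mem_product, Set.mem_image,
    Set.mem_ofPred_eq, Prod.exists]
  constructor
  · rintro ⟨x, hx, y, hy, rfl, h⟩
    exact ⟨x, y, ⟨⟨hx, hy⟩, h⟩, rfl⟩
  · rintro ⟨x, y, ⟨⟨hx, hy⟩, h⟩, rfl⟩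
    exact ⟨x, hx, y, hy, rfl, h⟩

theorem pairingE6_eq_zero_or_eq_one :
    ∀ a ∈ linesE6, ∀ b ∈ linesE6, a ≠ b → pairingE6 a b = 0 ∨ pairingE6 a b = 1 := by
  decide +kernel

theorem card_filter_pairingE6_eq_one :
    ∀ a ∈ linesE6, (linesE6.filter (pairingE6 a · = 1)).card = 10 := by
  decide +kernel

theorem card_filter_pairingE6_eq_zero :
    ∀ a ∈ linesE6, (linesE6.filter fun b => b ≠ a ∧ pairingE6 a b = 0).card = 16 := by
  decide +kernel

theorem pairwise_ne_and_pairingE6_eq_one_of_add_add_eq :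
    ∀ a ∈ linesE6, ∀ b ∈ linesE6, ∀ c ∈ linesE6, a + b + c = Fin.tail KE6 →
      a ≠ b ∧ a ≠ c ∧ b ≠ c ∧
        pairingE6 a b = 1 ∧ pairingE6 a c = 1 ∧ pairingE6 b c = 1 := by
  decide +kernel

theorem card_pairs_add_add_eq :
    ∀ a ∈ linesE6, (((linesE6 ×ˢ linesE6).filter fun z => a + z.1 + z.2 = Fin.tail KE6).image
      fun z => ({z.1, z.2} : Finset (Fin 6 → ℤ))).card = 5 := by
  decide +kernel

/-- in the marked `E₆` lattice with `K'` as above: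
(i) `⟨l(a), l(a')⟩ ∈ {0,1}` for distinct `a, a' ∈ I`;
(ii) each `a ∈ I` has exactly `10` elements `a' ∈ I` with `⟨l(a), l(a')⟩ = 1` and exactly
`16` elements `a' ≠ a` with `⟨l(a), l(a')⟩ = 0`;
(iii) if `a, a', a'' ∈ I` satisfy `l(a) + l(a') + l(a'') = K'` then they are pairwise
distinct and pairwise `⟨·,·⟩ = 1`;
(iv) for each `a ∈ I`, there are exactly `5` unordered pairs `{a', a''} ⊆ I` with
`l(a) + l(a') + l(a'') = K'`. -/
theorem stmt14 :
    (∀ a ∈ IE6, ∀ a' ∈ IE6, a ≠ a' →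
      qform gramE6 (lE6 a) (lE6 a') ∈ ({0, 1} : Set ℤ))
    ∧ (∀ a ∈ IE6,
        {a' ∈ IE6 | qform gramE6 (lE6 a) (lE6 a') = 1}.ncard = 10
        ∧ {a' ∈ IE6 | a' ≠ a ∧ qform gramE6 (lE6 a) (lE6 a') = 0}.ncard = 16)
    ∧ (∀ a ∈ IE6, ∀ a' ∈ IE6, ∀ a'' ∈ IE6,
        lE6 a + lE6 a' + lE6 a'' = KE6 →
          a ≠ a' ∧ a ≠ a'' ∧ a' ≠ a''
          ∧ qform gramE6 (lE6 a) (lE6 a') = 1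
          ∧ qform gramE6 (lE6 a) (lE6 a'') = 1
          ∧ qform gramE6 (lE6 a') (lE6 a'') = 1)
    ∧ ∀ a ∈ IE6,
        {s : Finset (Fin 6 → ℤ) | ∃ a' ∈ IE6, ∃ a'' ∈ IE6,
          s = {a', a''} ∧ lE6 a + lE6 a' + lE6 a'' = KE6}.ncard = 5 := by
  rw [IE6_eq_linesE6]
  simp only [Finset.mem_coe, qform_lE6, lE6_add_add_eq_KE6_iff]
  refine ⟨pairingE6_eq_zero_or_eq_one, fun a ha => ⟨?_, ?_⟩,
    pairwise_ne_and_pairingE6_eq_one_of_add_add_eq,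
    fun a ha => (ncard_setOf_eq_pair_eq_card_image _ _).trans (card_pairs_add_add_eq a ha)⟩
  · rw [← Finset.coe_filter, Set.ncard_coe_finset]
    exact card_filter_pairingE6_eq_one a ha
  · rw [← Finset.coe_filter, Set.ncard_coe_finset]
    exact card_filter_pairingE6_eq_zero a ha
end
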